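/- arXiv:1001.2862 — 4 statements merged into one kernel-verified Lean document; each statement's English description precedes it below -/
import Mathlib

section
/- For all natural numbers m and n, every simple graph H on the vertex set {0,…,m−1} × {0,…,n−1} that is a subgraph of the m × n square grid graph (the graph in which (i,j) and (i',j') are adjacent if and only if |i−i'| + |j−j'| = 1) has a touching triangle representation. -/
/-- A triangle in the plane: three affinely independent points. -/
structure Triangle where
  a : ℝ × ℝ
  b : ℝ × ℝ
  c : ℝ × ℝ
  indep : AffineIndependent ℝ ![a, b, c]

namespace Triangle

/-- The triangle as a subset of the plane: the convex hull of its vertices. -/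
def toSet (T : Triangle) : Set (ℝ × ℝ) :=
  convexHull ℝ {T.a, T.b, T.c}

/-- `p` is a vertex of the triangle `T`. -/
def IsVertex (T : Triangle) (p : ℝ × ℝ) : Prop :=
  p = T.a ∨ p = T.b ∨ p = T.c

/-- The segment from `x` to `y` is a side of `T`: `x` and `y` are two distinct
vertices of `T`. -/
def IsSide (T : Triangle) (x y : ℝ × ℝ) : Prop :=
  x ≠ y ∧ T.IsVertex x ∧ T.IsVertex y

end Triangle

/-- Two sets touch if their intersection contains more than one point. -/
def Touches (S₁ S₂ : Set (ℝ × ℝ)) : Prop :=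
  ∃ x y : ℝ × ℝ, x ≠ y ∧ x ∈ S₁ ∩ S₂ ∧ y ∈ S₁ ∩ S₂

/-- A touching triangle representation of a simple graph `G`: a triangle for each
vertex, pairwise disjoint interiors, and adjacency iff the triangles touch. -/
structure TTRep {V : Type*} (G : SimpleGraph V) where
  tri : V → Triangle
  disjoint_interiors : ∀ u v : V, u ≠ v →
    Disjoint (interior (tri u).toSet) (interior (tri v).toSet)
  adj_iff : ∀ u v : V, u ≠ v →
    (G.Adj u v ↔ Touches (tri u).toSet (tri v).toSet)

/-- A triangulation representation: a touching triangle representation in which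
any two touching triangles meet in a full common side of both. -/
structure TriangulationRep {V : Type*} (G : SimpleGraph V) extends TTRep G where
  full_side : ∀ u v : V, u ≠ v → Touches (tri u).toSet (tri v).toSet →
    ∃ x y : ℝ × ℝ, (tri u).IsSide x y ∧ (tri v).IsSide x y ∧
      (tri u).toSet ∩ (tri v).toSet = segment ℝ x y

namespace TTAux

lemma isLin (α β : ℝ) : IsLinearMap ℝ (fun z : ℝ×ℝ => α*z.1 + β*z.2) := by
  constructor
  · intro x y; simp; ring
  · intro c x; simp; ring

lemma hull3_le (v1 v2 v3 : ℝ×ℝ) {α β c : ℝ}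
    (h1 : α*v1.1+β*v1.2 ≤ c) (h2 : α*v2.1+β*v2.2 ≤ c) (h3 : α*v3.1+β*v3.2 ≤ c) :
    convexHull ℝ {v1,v2,v3} ⊆ {z : ℝ×ℝ | α*z.1+β*z.2 ≤ c} := by
  apply convexHull_min
  · rintro z (rfl|rfl|rfl) <;> assumption
  · exact convex_halfSpace_le (isLin α β) c

lemma hull3_ge (v1 v2 v3 : ℝ×ℝ) {α β c : ℝ}
    (h1 : c ≤ α*v1.1+β*v1.2) (h2 : c ≤ α*v2.1+β*v2.2) (h3 : c ≤ α*v3.1+β*v3.2) :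
    convexHull ℝ {v1,v2,v3} ⊆ {z : ℝ×ℝ | c ≤ α*z.1+β*z.2} := by
  apply convexHull_min
  · rintro z (rfl|rfl|rfl) <;> assumption
  · exact convex_halfSpace_ge (isLin α β) c

lemma lt_of_interior {S : Set (ℝ×ℝ)} {α β c : ℝ} (hab : 0 < α^2 + β^2)
    (hS : ∀ z ∈ S, α*z.1 + β*z.2 ≤ c) {z : ℝ×ℝ} (hz : z ∈ interior S) :
    α*z.1 + β*z.2 < c := by
  obtain ⟨ε, hε, hball⟩ := Metric.isOpen_iff.1 isOpen_interior z hz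
  set δ : ℝ := ε / (|α|+|β|+1) / 2 with hδdef
  have habs : 0 ≤ |α| + |β| := by positivity
  have hδ : 0 < δ := by positivity
  have hmem : (z.1 + δ*α, z.2 + δ*β) ∈ S := by
    apply interior_subset
    apply hball
    rw [Metric.mem_ball, Prod.dist_eq]
    have d1 : dist (z.1 + δ*α) z.1 = δ*|α| := by
      rw [Real.dist_eq, show z.1 + δ*α - z.1 = δ*α by ring, abs_mul, abs_of_pos hδ]
    have d2 : dist (z.2 + δ*β) z.2 = δ*|β| := by
      rw [Real.dist_eq, show z.2 + δ*β - z.2 = δ*β by ring, abs_mul, abs_of_pos hδ]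
    rw [d1, d2]
    have h1 : δ * |α| < ε := by
      rw [hδdef, div_div, div_mul_eq_mul_div, div_lt_iff₀ (by positivity)]
      nlinarith [abs_nonneg α, abs_nonneg β, hε]
    have h2 : δ * |β| < ε := by
      rw [hδdef, div_div, div_mul_eq_mul_div, div_lt_iff₀ (by positivity)]
      nlinarith [abs_nonneg α, abs_nonneg β, hε]
    exact max_lt h1 h2
  have hle := hS _ hmem
  simp only at hle
  nlinarith [sq_abs α, sq_abs β, hδ, hab]

lemma disj_of_sep {Sp Sq : Set (ℝ×ℝ)} {α β c c' : ℝ} (hab : 0 < α^2+β^2) (hcc : c ≤ c')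
    (hp : ∀ z ∈ Sp, α*z.1+β*z.2 ≤ c) (hq : ∀ z ∈ Sq, c' ≤ α*z.1+β*z.2) :
    Disjoint (interior Sp) (interior Sq) := by
  rw [Set.disjoint_left]
  intro z hzp hzq
  have h1 : α*z.1+β*z.2 < c := lt_of_interior hab hp hzp
  have h2 := hq z (interior_subset hzq)
  linarith

lemma combo_mem {S : Set (ℝ×ℝ)} (hS : Convex ℝ S) {u w : ℝ×ℝ} (hu : u ∈ S) (hw : w ∈ S)
    {t : ℝ} (h0 : 0 ≤ t) (h1 : t ≤ 1) :
    ((1-t)*u.1 + t*w.1, (1-t)*u.2 + t*w.2) ∈ S := by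
  have := hS hu hw (by linarith : (0:ℝ) ≤ 1 - t) h0 (by ring)
  convert this using 1
  ext <;> simp

lemma affineIndep_of_det {p q r : ℝ×ℝ}
    (h : (q.1-p.1)*(r.2-p.2) - (q.2-p.2)*(r.1-p.1) ≠ 0) :
    AffineIndependent ℝ ![p,q,r] := by
  rw [affineIndependent_iff_not_collinear]
  intro hc
  have hp : p ∈ Set.range ![p,q,r] := ⟨0, rfl⟩
  rw [collinear_iff_of_mem hp] at hc
  obtain ⟨v, hv⟩ := hc
  obtain ⟨r1, hr1⟩ := hv q ⟨1, rfl⟩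
  obtain ⟨r2, hr2⟩ := hv r ⟨2, rfl⟩
  apply h
  have e1 : q.1 - p.1 = r1 * v.1 := by rw [hr1]; simp
  have e2 : q.2 - p.2 = r1 * v.2 := by rw [hr1]; simp
  have e3 : r.1 - p.1 = r2 * v.1 := by rw [hr2]; simp
  have e4 : r.2 - p.2 = r2 * v.2 := by rw [hr2]; simp
  rw [e1, e2, e3, e4]; ring

lemma touches_symm {S T : Set (ℝ×ℝ)} (h : Touches S T) : Touches T S := by
  obtain ⟨x,y,hxy,hx,hy⟩ := h
  exact ⟨x,y,hxy,⟨hx.2,hx.1⟩,⟨hy.2,hy.1⟩⟩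

/-! ### The triangles -/

noncomputable section

def vvL (d k a b : ℝ) : ℝ×ℝ := (d - 1 + a/2, -d^2 + 2*d - d*a - k)
def vvR (d k a b : ℝ) : ℝ×ℝ := (d + 1 - b/2, -d^2 - 2*d + d*b - k)
def vvA (d k a b : ℝ) : ℝ×ℝ := (d + (a-b)/4, -d^2 + 2 - k - a - (d-1)*(a-b)/2)

def hset (d k a b : ℝ) : Set (ℝ×ℝ) := convexHull ℝ {vvL d k a b, vvR d k a b, vvA d k a b}

lemma hset_convex (d k a b : ℝ) : Convex ℝ (hset d k a b) := convex_convexHull ℝ _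

lemma hset_facts {d k a b : ℝ} (ha0 : 0 ≤ a) (ha1 : a ≤ 1/4) (hb0 : 0 ≤ b) (hb1 : b ≤ 1/4)
    {z : ℝ×ℝ} (hz : z ∈ hset d k a b) :
    d^2 - k ≤ z.2 + 2*d*z.1 ∧
    z.2 + 2*(d-1)*z.1 ≤ (d-1)^2 - k + 1 - a ∧
    z.2 + 2*(d+1)*z.1 ≤ (d+1)^2 - k + 1 - b ∧
    d - 1 + a/2 ≤ z.1 ∧ z.1 ≤ d + 1 - b/2 := by
  refine ⟨?_, ?_, ?_, ?_, ?_⟩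
  · have h := hull3_ge (vvL d k a b) (vvR d k a b) (vvA d k a b)
      (α := 2*d) (β := 1) (c := d^2 - k) (by simp only [vvL]; nlinarith)
      (by simp only [vvR]; nlinarith) (by simp only [vvA]; nlinarith) hz
    simp only [Set.mem_setOf_eq] at h; linarith
  · have h := hull3_le (vvL d k a b) (vvR d k a b) (vvA d k a b)
      (α := 2*(d-1)) (β := 1) (c := (d-1)^2 - k + 1 - a) (by simp only [vvL]; nlinarith)
      (by simp only [vvR]; nlinarith) (by simp only [vvA]; nlinarith) hz
    simp only [Set.mem_setOf_eq] at h; linarith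
  · have h := hull3_le (vvL d k a b) (vvR d k a b) (vvA d k a b)
      (α := 2*(d+1)) (β := 1) (c := (d+1)^2 - k + 1 - b) (by simp only [vvL]; nlinarith)
      (by simp only [vvR]; nlinarith) (by simp only [vvA]; nlinarith) hz
    simp only [Set.mem_setOf_eq] at h; linarith
  · have h := hull3_ge (vvL d k a b) (vvR d k a b) (vvA d k a b)
      (α := 1) (β := 0) (c := d - 1 + a/2) (by simp only [vvL]; nlinarith)
      (by simp only [vvR]; nlinarith) (by simp only [vvA]; nlinarith) hz
    simp only [Set.mem_setOf_eq] at h; linarith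
  · have h := hull3_le (vvL d k a b) (vvR d k a b) (vvA d k a b)
      (α := 1) (β := 0) (c := d + 1 - b/2) (by simp only [vvL]; nlinarith)
      (by simp only [vvR]; nlinarith) (by simp only [vvA]; nlinarith) hz
    simp only [Set.mem_setOf_eq] at h; linarith

end
end TTAux
namespace TTAux
noncomputable section

/-! ### Case lemmas for pairs of triangles -/

lemma caseC1 {d k a b d' k' a' b' : ℝ}
    (ha0 : 0 ≤ a) (ha1 : a ≤ 1/4) (hb0 : 0 ≤ b) (hb1 : b ≤ 1/4)
    (ha0' : 0 ≤ a') (ha1' : a' ≤ 1/4) (hb0' : 0 ≤ b') (hb1' : b' ≤ 1/4)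
    (hd : d + 3 ≤ d') :
    Disjoint (interior (hset d k a b)) (interior (hset d' k' a' b')) ∧
      ¬ Touches (hset d k a b) (hset d' k' a' b') := by
  constructor
  · refine disj_of_sep (α := 1) (β := 0) (c := d+1) (c' := d+2) (by norm_num) (by linarith) ?_ ?_
    · intro z hz
      have h := (hset_facts ha0 ha1 hb0 hb1 hz).2.2.2.2
      linarith
    · intro z hz
      have h := (hset_facts ha0' ha1' hb0' hb1' hz).2.2.2.1
      linarith
  · rintro ⟨x, y, hxy, ⟨hxp, hxq⟩, -⟩
    have h1 := (hset_facts ha0 ha1 hb0 hb1 hxp).2.2.2.2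
    have h2 := (hset_facts ha0' ha1' hb0' hb1' hxq).2.2.2.1
    linarith

lemma caseC2 {d k a b d' k' a' b' : ℝ}
    (ha0 : 0 ≤ a) (ha1 : a ≤ 1/4) (hb0 : 0 ≤ b) (hb1 : b ≤ 1/4)
    (ha0' : 0 ≤ a') (ha1' : a' ≤ 1/4) (hb0' : 0 ≤ b') (hb1' : b' ≤ 1/4)
    (hd : d' = d + 2) :
    Disjoint (interior (hset d k a b)) (interior (hset d' k' a' b')) ∧
      ¬ Touches (hset d k a b) (hset d' k' a' b') := by
  subst hd
  constructor
  · refine disj_of_sep (α := 1) (β := 0) (c := d+1) (c' := d+1) (by norm_num) le_rfl ?_ ?_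
    · intro z hz
      have h := (hset_facts ha0 ha1 hb0 hb1 hz).2.2.2.2
      linarith
    · intro z hz
      have h := (hset_facts ha0' ha1' hb0' hb1' hz).2.2.2.1
      linarith
  · rintro ⟨x, y, hxy, ⟨hxp, hxq⟩, ⟨hyp, hyq⟩⟩
    have pin : ∀ z : ℝ×ℝ, z ∈ hset d k a b → z ∈ hset (d+2) k' a' b' →
        z = (d+1, -(d^2)-2*d-k) := by
      intro z hzp hzq
      obtain ⟨c1, -, c3, -, c5⟩ := hset_facts ha0 ha1 hb0 hb1 hzp
      obtain ⟨-, -, -, e4, -⟩ := hset_facts ha0' ha1' hb0' hb1' hzq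
      have hz1 : z.1 = d + 1 := by linarith
      have hb' : b = 0 := by linarith
      have hmul : d * z.1 = d*d + d := by rw [hz1]; ring
      have hz2 : z.2 = -(d^2)-2*d-k := by linarith
      exact Prod.ext_iff.mpr ⟨hz1, hz2⟩
    exact hxy ((pin x hxp hxq).trans (pin y hyp hyq).symm)

lemma caseC3 {d k a b d' k' a' b' : ℝ}
    (ha0 : 0 ≤ a) (ha1 : a ≤ 1/4) (hb0 : 0 ≤ b) (hb1 : b ≤ 1/4)
    (ha0' : 0 ≤ a') (ha1' : a' ≤ 1/4) (hb0' : 0 ≤ b') (hb1' : b' ≤ 1/4)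
    (hd : d' = d) (hk : k + 2 ≤ k') :
    Disjoint (interior (hset d k a b)) (interior (hset d' k' a' b')) ∧
      ¬ Touches (hset d k a b) (hset d' k' a' b') := by
  subst hd
  constructor
  · refine (disj_of_sep (α := 2*d') (β := 1) (c := d'^2 + 2 - k') (c' := d'^2 - k)
      (by positivity) (by linarith) ?_ ?_).symm
    · intro z hz
      obtain ⟨-, e2, e3, -, -⟩ := hset_facts ha0' ha1' hb0' hb1' hz
      nlinarith [e2, e3]
    · intro z hz
      have h := (hset_facts ha0 ha1 hb0 hb1 hz).1
      linarith
  · rintro ⟨x, y, hxy, ⟨hxp, hxq⟩, ⟨hyp, hyq⟩⟩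
    have pin : ∀ z : ℝ×ℝ, z ∈ hset d' k a b → z ∈ hset d' k' a' b' →
        z = (d', -(d'^2)-k) := by
      intro z hzp hzq
      have c1 := (hset_facts ha0 ha1 hb0 hb1 hzp).1
      obtain ⟨-, e2, e3, -, -⟩ := hset_facts ha0' ha1' hb0' hb1' hzq
      have hz1 : z.1 = d' := by nlinarith [c1, e2, e3]
      have hmul : d' * z.1 = d'*d' := by rw [hz1]
      have hz2 : z.2 = -(d'^2)-k := by nlinarith [c1, e2, e3, hmul]
      exact Prod.ext_iff.mpr ⟨hz1, hz2⟩
    exact hxy ((pin x hxp hxq).trans (pin y hyp hyq).symm)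

lemma caseC4 {d k a b d' k' a' b' : ℝ}
    (ha0 : 0 ≤ a) (ha1 : a ≤ 1/4) (hb0 : 0 ≤ b) (hb1 : b ≤ 1/4)
    (ha0' : 0 ≤ a') (ha1' : a' ≤ 1/4) (hb0' : 0 ≤ b') (hb1' : b' ≤ 1/4)
    (hd : d' = d + 1) (hk : k + 1 ≤ k') :
    Disjoint (interior (hset d k a b)) (interior (hset d' k' a' b')) ∧
      (k + 1 < k' + a' → ¬ Touches (hset d k a b) (hset d' k' a' b')) := by
  subst hd
  constructor
  · refine (disj_of_sep (α := 2*d) (β := 1) (c := d^2 - k' + 1 - a') (c' := d^2 - k)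
      (by positivity) (by linarith) ?_ ?_).symm
    · intro z hz
      have h := (hset_facts ha0' ha1' hb0' hb1' hz).2.1
      linarith
    · intro z hz
      have h := (hset_facts ha0 ha1 hb0 hb1 hz).1
      linarith
  · intro hstrict
    rintro ⟨x, y, hxy, ⟨hxp, hxq⟩, -⟩
    have c1 := (hset_facts ha0 ha1 hb0 hb1 hxp).1
    have e2 := (hset_facts ha0' ha1' hb0' hb1' hxq).2.1
    nlinarith [c1, e2]

lemma caseC5 {d k a b d' k' a' b' : ℝ}
    (ha0 : 0 ≤ a) (ha1 : a ≤ 1/4) (hb0 : 0 ≤ b) (hb1 : b ≤ 1/4)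
    (ha0' : 0 ≤ a') (ha1' : a' ≤ 1/4) (hb0' : 0 ≤ b') (hb1' : b' ≤ 1/4)
    (hd : d' = d - 1) (hk : k + 1 ≤ k') :
    Disjoint (interior (hset d k a b)) (interior (hset d' k' a' b')) ∧
      (k + 1 < k' + b' → ¬ Touches (hset d k a b) (hset d' k' a' b')) := by
  subst hd
  constructor
  · refine (disj_of_sep (α := 2*d) (β := 1) (c := d^2 - k' + 1 - b') (c' := d^2 - k)
      (by positivity) (by linarith) ?_ ?_).symm
    · intro z hz
      have h := (hset_facts ha0' ha1' hb0' hb1' hz).2.2.1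
      nlinarith [h]
    · intro z hz
      have h := (hset_facts ha0 ha1 hb0 hb1 hz).1
      linarith
  · intro hstrict
    rintro ⟨x, y, hxy, ⟨hxp, hxq⟩, -⟩
    have c1 := (hset_facts ha0 ha1 hb0 hb1 hxp).1
    have e3 := (hset_facts ha0' ha1' hb0' hb1' hxq).2.2.1
    nlinarith [c1, e3]

end
end TTAux
namespace TTAux
noncomputable section

set_option maxHeartbeats 1000000

lemma mem1 (v1 v2 v3 : ℝ×ℝ) : v1 ∈ ({v1, v2, v3} : Set (ℝ×ℝ)) := by simp
lemma mem2 (v1 v2 v3 : ℝ×ℝ) : v2 ∈ ({v1, v2, v3} : Set (ℝ×ℝ)) := by simp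
lemma mem3 (v1 v2 v3 : ℝ×ℝ) : v3 ∈ ({v1, v2, v3} : Set (ℝ×ℝ)) := by simp

lemma touchA1 {d k a b b' : ℝ}
    (ha0 : 0 ≤ a) (ha1 : a ≤ 1/4) (hb0 : 0 ≤ b) (hb1 : b ≤ 1/4)
    (hb0' : 0 ≤ b') (hb1' : b' ≤ 1/4) :
    Touches (hset d k a b) (hset (d+1) (k+1) 0 b') := by
  have hden : (0:ℝ) < 1 - b'/4 := by linarith
  have hden' : (1:ℝ) - b'/4 ≠ 0 := ne_of_gt hden
  have hconv := hset_convex d k a b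
  have hconv' := hset_convex (d+1) (k+1) 0 b'
  have hL : vvL d k a b ∈ hset d k a b := subset_convexHull ℝ _ (mem1 _ _ _)
  have hR : vvR d k a b ∈ hset d k a b := subset_convexHull ℝ _ (mem2 _ _ _)
  have hL' : vvL (d+1) (k+1) 0 b' ∈ hset (d+1) (k+1) 0 b' :=
    subset_convexHull ℝ _ (mem1 _ _ _)
  have hA' : vvA (d+1) (k+1) 0 b' ∈ hset (d+1) (k+1) 0 b' :=
    subset_convexHull ℝ _ (mem3 _ _ _)
  set s1 : ℝ := (1/4 + 3*a/16 - 5*b/16)/(1 - b'/4) with hs1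
  set s2 : ℝ := (3/4 + a/16 - 7*b/16)/(1 - b'/4) with hs2
  have hs1' : s1 * (1 - b'/4) = 1/4 + 3*a/16 - 5*b/16 := by
    rw [hs1]; exact div_mul_cancel₀ _ hden'
  have hs2' : s2 * (1 - b'/4) = 3/4 + a/16 - 7*b/16 := by
    rw [hs2]; exact div_mul_cancel₀ _ hden'
  have hs10 : 0 ≤ s1 := by
    rw [hs1]; apply div_nonneg _ (le_of_lt hden); linarith
  have hs11 : s1 ≤ 1 := by
    rw [hs1, div_le_one hden]; linarith
  have hs20 : 0 ≤ s2 := by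
    rw [hs2]; apply div_nonneg _ (le_of_lt hden); linarith
  have hs21 : s2 ≤ 1 := by
    rw [hs2, div_le_one hden]; linarith
  have hXp := combo_mem hconv hL hR (t := (5:ℝ)/8) (by norm_num) (by norm_num)
  have hYp := combo_mem hconv hL hR (t := (7:ℝ)/8) (by norm_num) (by norm_num)
  have hXq' := combo_mem hconv' hL' hA' hs10 hs11
  have hYq' := combo_mem hconv' hL' hA' hs20 hs21
  have eX : ((1-s1)*(vvL (d+1) (k+1) 0 b').1 + s1*(vvA (d+1) (k+1) 0 b').1,
             (1-s1)*(vvL (d+1) (k+1) 0 b').2 + s1*(vvA (d+1) (k+1) 0 b').2)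
      = ((1-(5:ℝ)/8)*(vvL d k a b).1 + (5/8)*(vvR d k a b).1,
         (1-(5:ℝ)/8)*(vvL d k a b).2 + (5/8)*(vvR d k a b).2) := by
    rw [Prod.mk.injEq]
    refine ⟨?_, ?_⟩
    · simp only [vvL, vvR, vvA]
      linear_combination hs1'
    · simp only [vvL, vvR, vvA]
      linear_combination (-2*d) * hs1'
  have eY : ((1-s2)*(vvL (d+1) (k+1) 0 b').1 + s2*(vvA (d+1) (k+1) 0 b').1,
             (1-s2)*(vvL (d+1) (k+1) 0 b').2 + s2*(vvA (d+1) (k+1) 0 b').2)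
      = ((1-(7:ℝ)/8)*(vvL d k a b).1 + (7/8)*(vvR d k a b).1,
         (1-(7:ℝ)/8)*(vvL d k a b).2 + (7/8)*(vvR d k a b).2) := by
    rw [Prod.mk.injEq]
    refine ⟨?_, ?_⟩
    · simp only [vvL, vvR, vvA]
      linear_combination hs2'
    · simp only [vvL, vvR, vvA]
      linear_combination (-2*d) * hs2'
  rw [eX] at hXq'
  rw [eY] at hYq'
  refine ⟨_, _, ?_, ⟨hXp, hXq'⟩, ⟨hYp, hYq'⟩⟩
  intro hE
  have h1 := congrArg Prod.fst hE
  simp only [vvL, vvR] at h1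
  linarith [h1]

lemma touchA2 {d k a b a' : ℝ}
    (ha0 : 0 ≤ a) (ha1 : a ≤ 1/4) (hb0 : 0 ≤ b) (hb1 : b ≤ 1/4)
    (ha0' : 0 ≤ a') (ha1' : a' ≤ 1/4) :
    Touches (hset d k a b) (hset (d-1) (k+1) a' 0) := by
  have hden : (0:ℝ) < 1 - a'/4 := by linarith
  have hden' : (1:ℝ) - a'/4 ≠ 0 := ne_of_gt hden
  have hconv := hset_convex d k a b
  have hconv' := hset_convex (d-1) (k+1) a' 0
  have hL : vvL d k a b ∈ hset d k a b := subset_convexHull ℝ _ (mem1 _ _ _)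
  have hR : vvR d k a b ∈ hset d k a b := subset_convexHull ℝ _ (mem2 _ _ _)
  have hR' : vvR (d-1) (k+1) a' 0 ∈ hset (d-1) (k+1) a' 0 :=
    subset_convexHull ℝ _ (mem2 _ _ _)
  have hA' : vvA (d-1) (k+1) a' 0 ∈ hset (d-1) (k+1) a' 0 :=
    subset_convexHull ℝ _ (mem3 _ _ _)
  have hex : ∀ N : ℝ, 0 ≤ N → N ≤ 1 - a'/4 → ∃ s : ℝ, (1-s)*(1-a'/4) = N ∧ 0 ≤ s ∧ s ≤ 1 := by
    intro N h0 h1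
    refine ⟨1 - N/(1-a'/4), ?_, ?_, ?_⟩
    · have h2 : (1:ℝ) - (1 - N/(1-a'/4)) = N/(1-a'/4) := by ring
      rw [h2]; exact div_mul_cancel₀ _ hden'
    · rw [sub_nonneg, div_le_one hden]; linarith
    · have h3 : 0 ≤ N/(1-a'/4) := div_nonneg h0 (le_of_lt hden)
      linarith
  obtain ⟨s1, hs1', hs10, hs11⟩ := hex (3/4-7*a/16+b/16) (by linarith) (by linarith)
  obtain ⟨s2, hs2', hs20, hs21⟩ := hex (1/4-5*a/16+3*b/16) (by linarith) (by linarith)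
  have hXp := combo_mem hconv hL hR (t := (1:ℝ)/8) (by norm_num) (by norm_num)
  have hYp := combo_mem hconv hL hR (t := (3:ℝ)/8) (by norm_num) (by norm_num)
  have hXq' := combo_mem hconv' hA' hR' hs10 hs11
  have hYq' := combo_mem hconv' hA' hR' hs20 hs21
  have eX : ((1-s1)*(vvA (d-1) (k+1) a' 0).1 + s1*(vvR (d-1) (k+1) a' 0).1,
             (1-s1)*(vvA (d-1) (k+1) a' 0).2 + s1*(vvR (d-1) (k+1) a' 0).2)
      = ((1-(1:ℝ)/8)*(vvL d k a b).1 + (1/8)*(vvR d k a b).1,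
         (1-(1:ℝ)/8)*(vvL d k a b).2 + (1/8)*(vvR d k a b).2) := by
    rw [Prod.mk.injEq]
    refine ⟨?_, ?_⟩
    · simp only [vvL, vvR, vvA]
      linear_combination (-1 : ℝ) * hs1'
    · simp only [vvL, vvR, vvA]
      linear_combination (2*d) * hs1'
  have eY : ((1-s2)*(vvA (d-1) (k+1) a' 0).1 + s2*(vvR (d-1) (k+1) a' 0).1,
             (1-s2)*(vvA (d-1) (k+1) a' 0).2 + s2*(vvR (d-1) (k+1) a' 0).2)
      = ((1-(3:ℝ)/8)*(vvL d k a b).1 + (3/8)*(vvR d k a b).1,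
         (1-(3:ℝ)/8)*(vvL d k a b).2 + (3/8)*(vvR d k a b).2) := by
    rw [Prod.mk.injEq]
    refine ⟨?_, ?_⟩
    · simp only [vvL, vvR, vvA]
      linear_combination (-1 : ℝ) * hs2'
    · simp only [vvL, vvR, vvA]
      linear_combination (2*d) * hs2'
  rw [eX] at hXq'
  rw [eY] at hYq'
  refine ⟨_, _, ?_, ⟨hXp, hXq'⟩, ⟨hYp, hYq'⟩⟩
  intro hE
  have h1 := congrArg Prod.fst hE
  simp only [vvL, vvR] at h1
  linarith [h1]

end
end TTAux
namespace TTAux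
noncomputable section

set_option maxHeartbeats 1000000

variable {m n : ℕ}

def dP (p : Fin m × Fin n) : ℝ := (p.1.val : ℝ) - (p.2.val : ℝ)
def kP (p : Fin m × Fin n) : ℝ := (p.1.val : ℝ) + (p.2.val : ℝ)

open Classical in
def sA (H : SimpleGraph (Fin m × Fin n)) (p : Fin m × Fin n) : ℝ :=
  if ∃ q, H.Adj p q ∧ (q.1.val : ℤ) = (p.1.val : ℤ) - 1 ∧ (q.2.val : ℤ) = (p.2.val : ℤ)
  then 0 else 1/4

open Classical in
def sB (H : SimpleGraph (Fin m × Fin n)) (p : Fin m × Fin n) : ℝ :=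
  if ∃ q, H.Adj p q ∧ (q.1.val : ℤ) = (p.1.val : ℤ) ∧ (q.2.val : ℤ) = (p.2.val : ℤ) - 1
  then 0 else 1/4

lemma sA_nonneg (H : SimpleGraph (Fin m × Fin n)) (p : Fin m × Fin n) : 0 ≤ sA H p := by
  unfold sA; split <;> norm_num

lemma sA_le (H : SimpleGraph (Fin m × Fin n)) (p : Fin m × Fin n) : sA H p ≤ 1/4 := by
  unfold sA; split <;> norm_num

lemma sB_nonneg (H : SimpleGraph (Fin m × Fin n)) (p : Fin m × Fin n) : 0 ≤ sB H p := by
  unfold sB; split <;> norm_num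

lemma sB_le (H : SimpleGraph (Fin m × Fin n)) (p : Fin m × Fin n) : sB H p ≤ 1/4 := by
  unfold sB; split <;> norm_num

lemma sA_zero {H : SimpleGraph (Fin m × Fin n)} {p q : Fin m × Fin n} (h : H.Adj p q)
    (h1 : (q.1.val : ℤ) = (p.1.val : ℤ) - 1) (h2 : (q.2.val : ℤ) = (p.2.val : ℤ)) :
    sA H p = 0 := by
  unfold sA; rw [if_pos ⟨q, h, h1, h2⟩]

lemma sB_zero {H : SimpleGraph (Fin m × Fin n)} {p q : Fin m × Fin n} (h : H.Adj p q)
    (h1 : (q.1.val : ℤ) = (p.1.val : ℤ)) (h2 : (q.2.val : ℤ) = (p.2.val : ℤ) - 1) :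
    sB H p = 0 := by
  unfold sB; rw [if_pos ⟨q, h, h1, h2⟩]

lemma sA_quarter {H : SimpleGraph (Fin m × Fin n)} {p r : Fin m × Fin n} (h : ¬ H.Adj p r)
    (h1 : (r.1.val : ℤ) = (p.1.val : ℤ) - 1) (h2 : (r.2.val : ℤ) = (p.2.val : ℤ)) :
    sA H p = 1/4 := by
  unfold sA; rw [if_neg]
  rintro ⟨q, hq, hq1, hq2⟩
  have hqr : q = r := by
    refine Prod.ext_iff.mpr ⟨?_, ?_⟩
    · exact Fin.val_injective (by omega)
    · exact Fin.val_injective (by omega)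
  exact h (hqr ▸ hq)

lemma sB_quarter {H : SimpleGraph (Fin m × Fin n)} {p r : Fin m × Fin n} (h : ¬ H.Adj p r)
    (h1 : (r.1.val : ℤ) = (p.1.val : ℤ)) (h2 : (r.2.val : ℤ) = (p.2.val : ℤ) - 1) :
    sB H p = 1/4 := by
  unfold sB; rw [if_neg]
  rintro ⟨q, hq, hq1, hq2⟩
  have hqr : q = r := by
    refine Prod.ext_iff.mpr ⟨?_, ?_⟩
    · exact Fin.val_injective (by omega)
    · exact Fin.val_injective (by omega)
  exact h (hqr ▸ hq)

def triOf (H : SimpleGraph (Fin m × Fin n)) (p : Fin m × Fin n) : Triangle where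
  a := vvL (dP p) (kP p) (sA H p) (sB H p)
  b := vvR (dP p) (kP p) (sA H p) (sB H p)
  c := vvA (dP p) (kP p) (sA H p) (sB H p)
  indep := by
    apply affineIndep_of_det
    have ha1 := sA_le H p
    have hb1 := sB_le H p
    simp only [vvL, vvR, vvA]
    intro h0
    have h1 : ((4:ℝ) - sA H p - sB H p)^2 / 4 = 0 := by linear_combination h0
    nlinarith [h1, ha1, hb1]

def TS (H : SimpleGraph (Fin m × Fin n)) (p : Fin m × Fin n) : Set (ℝ×ℝ) :=
  hset (dP p) (kP p) (sA H p) (sB H p)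

lemma triOf_toSet (H : SimpleGraph (Fin m × Fin n)) (p : Fin m × Fin n) :
    (triOf H p).toSet = TS H p := rfl

/-- The main pairwise analysis. -/
lemma main_pair (H : SimpleGraph (Fin m × Fin n)) (p q : Fin m × Fin n) (hne : p ≠ q) :
    Disjoint (interior (TS H p)) (interior (TS H q)) ∧
      (¬ H.Adj p q → ¬ Touches (TS H p) (TS H q)) := by
  have bA0p := sA_nonneg H p; have bA1p := sA_le H p
  have bB0p := sB_nonneg H p; have bB1p := sB_le H p
  have bA0q := sA_nonneg H q; have bA1q := sA_le H q
  have bB0q := sB_nonneg H q; have bB1q := sB_le H q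
  have hne2 : ¬ ((q.1.val : ℤ) = (p.1.val : ℤ) ∧ (q.2.val : ℤ) = (p.2.val : ℤ)) := by
    rintro ⟨h1, h2⟩
    exact hne (Prod.ext_iff.mpr ⟨Fin.val_injective (by omega),
      Fin.val_injective (by omega)⟩).symm
  -- bridges
  have hdq : dP q = dP p + (((q.1.val : ℤ) - (q.2.val : ℤ)) - ((p.1.val : ℤ) - (p.2.val : ℤ)) : ℤ) := by
    unfold dP; push_cast; ring
  have hkq : kP q = kP p + (((q.1.val : ℤ) + (q.2.val : ℤ)) - ((p.1.val : ℤ) + (p.2.val : ℤ)) : ℤ) := by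
    unfold kP; push_cast; ring
  rcases (by omega :
      (3 ≤ ((q.1.val : ℤ) - (q.2.val : ℤ)) - ((p.1.val : ℤ) - (p.2.val : ℤ))) ∨
      (((q.1.val : ℤ) - (q.2.val : ℤ)) - ((p.1.val : ℤ) - (p.2.val : ℤ)) ≤ -3) ∨
      (((q.1.val : ℤ) - (q.2.val : ℤ)) - ((p.1.val : ℤ) - (p.2.val : ℤ)) = 2) ∨
      (((q.1.val : ℤ) - (q.2.val : ℤ)) - ((p.1.val : ℤ) - (p.2.val : ℤ)) = -2) ∨
      ((((q.1.val : ℤ) - (q.2.val : ℤ)) - ((p.1.val : ℤ) - (p.2.val : ℤ)) = 0) ∧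
        2 ≤ ((q.1.val : ℤ) + (q.2.val : ℤ)) - ((p.1.val : ℤ) + (p.2.val : ℤ))) ∨
      ((((q.1.val : ℤ) - (q.2.val : ℤ)) - ((p.1.val : ℤ) - (p.2.val : ℤ)) = 0) ∧
        ((q.1.val : ℤ) + (q.2.val : ℤ)) - ((p.1.val : ℤ) + (p.2.val : ℤ)) ≤ -2) ∨
      ((((q.1.val : ℤ) - (q.2.val : ℤ)) - ((p.1.val : ℤ) - (p.2.val : ℤ)) = 1) ∧
        1 ≤ ((q.1.val : ℤ) + (q.2.val : ℤ)) - ((p.1.val : ℤ) + (p.2.val : ℤ))) ∨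
      ((((q.1.val : ℤ) - (q.2.val : ℤ)) - ((p.1.val : ℤ) - (p.2.val : ℤ)) = 1) ∧
        ((q.1.val : ℤ) + (q.2.val : ℤ)) - ((p.1.val : ℤ) + (p.2.val : ℤ)) ≤ -1) ∨
      ((((q.1.val : ℤ) - (q.2.val : ℤ)) - ((p.1.val : ℤ) - (p.2.val : ℤ)) = -1) ∧
        1 ≤ ((q.1.val : ℤ) + (q.2.val : ℤ)) - ((p.1.val : ℤ) + (p.2.val : ℤ))) ∨
      ((((q.1.val : ℤ) - (q.2.val : ℤ)) - ((p.1.val : ℤ) - (p.2.val : ℤ)) = -1) ∧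
        ((q.1.val : ℤ) + (q.2.val : ℤ)) - ((p.1.val : ℤ) + (p.2.val : ℤ)) ≤ -1))
    with h | h | h | h | ⟨h, hk⟩ | ⟨h, hk⟩ | ⟨h, hk⟩ | ⟨h, hk⟩ | ⟨h, hk⟩ | ⟨h, hk⟩
  · -- C1
    have hd3 : dP p + 3 ≤ dP q := by
      rw [hdq]
      have : ((3:ℤ) : ℝ) ≤ ((((q.1.val : ℤ) - (q.2.val : ℤ)) - ((p.1.val : ℤ) - (p.2.val : ℤ)) : ℤ) : ℝ) :=
        Int.cast_le.mpr h
      push_cast at this ⊢; linarith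
    obtain ⟨h1, h2⟩ := caseC1 bA0p bA1p bB0p bB1p bA0q bA1q bB0q bB1q hd3
    exact ⟨h1, fun _ => h2⟩
  · -- C1 swapped
    have hd3 : dP q + 3 ≤ dP p := by
      rw [hdq]
      have : ((((q.1.val : ℤ) - (q.2.val : ℤ)) - ((p.1.val : ℤ) - (p.2.val : ℤ)) : ℤ) : ℝ) ≤ ((-3:ℤ) : ℝ) :=
        Int.cast_le.mpr h
      push_cast at this ⊢; linarith
    obtain ⟨h1, h2⟩ := caseC1 bA0q bA1q bB0q bB1q bA0p bA1p bB0p bB1p hd3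
    exact ⟨h1.symm, fun _ ht => h2 (touches_symm ht)⟩
  · -- C2
    have hd2 : dP q = dP p + 2 := by
      rw [hdq, h]; push_cast; ring
    obtain ⟨h1, h2⟩ := caseC2 bA0p bA1p bB0p bB1p bA0q bA1q bB0q bB1q hd2
    exact ⟨h1, fun _ => h2⟩
  · -- C2 swapped
    have hd2 : dP p = dP q + 2 := by
      rw [hdq, h]; push_cast; ring
    obtain ⟨h1, h2⟩ := caseC2 bA0q bA1q bB0q bB1q bA0p bA1p bB0p bB1p hd2
    exact ⟨h1.symm, fun _ ht => h2 (touches_symm ht)⟩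
  · -- C3
    have hd0 : dP q = dP p := by rw [hdq, h]; push_cast; ring
    have hk2 : kP p + 2 ≤ kP q := by
      rw [hkq]
      have : ((2:ℤ) : ℝ) ≤ ((((q.1.val : ℤ) + (q.2.val : ℤ)) - ((p.1.val : ℤ) + (p.2.val : ℤ)) : ℤ) : ℝ) :=
        Int.cast_le.mpr hk
      push_cast at this ⊢; linarith
    obtain ⟨h1, h2⟩ := caseC3 bA0p bA1p bB0p bB1p bA0q bA1q bB0q bB1q hd0 hk2
    exact ⟨h1, fun _ => h2⟩
  · -- C3 swapped
    have hd0 : dP p = dP q := by rw [hdq, h]; push_cast; ring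
    have hk2 : kP q + 2 ≤ kP p := by
      rw [hkq]
      have : ((((q.1.val : ℤ) + (q.2.val : ℤ)) - ((p.1.val : ℤ) + (p.2.val : ℤ)) : ℤ) : ℝ) ≤ ((-2:ℤ) : ℝ) :=
        Int.cast_le.mpr hk
      push_cast at this ⊢; linarith
    obtain ⟨h1, h2⟩ := caseC3 bA0q bA1q bB0q bB1q bA0p bA1p bB0p bB1p hd0 hk2
    exact ⟨h1.symm, fun _ ht => h2 (touches_symm ht)⟩
  · -- C4 : d' = d+1, k' ≥ k+1
    have hd1 : dP q = dP p + 1 := by rw [hdq, h]; push_cast; ring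
    have hk1 : kP p + 1 ≤ kP q := by
      rw [hkq]
      have : ((1:ℤ) : ℝ) ≤ ((((q.1.val : ℤ) + (q.2.val : ℤ)) - ((p.1.val : ℤ) + (p.2.val : ℤ)) : ℤ) : ℝ) :=
        Int.cast_le.mpr hk
      push_cast at this ⊢; linarith
    refine ⟨(caseC4 bA0p bA1p bB0p bB1p bA0q bA1q bB0q bB1q hd1 hk1).1, fun hnadj => ?_⟩
    refine (caseC4 bA0p bA1p bB0p bB1p bA0q bA1q bB0q bB1q hd1 hk1).2 ?_
    rcases (by omega : ((q.1.val : ℤ) + (q.2.val : ℤ)) - ((p.1.val : ℤ) + (p.2.val : ℤ)) = 1 ∨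
        3 ≤ ((q.1.val : ℤ) + (q.2.val : ℤ)) - ((p.1.val : ℤ) + (p.2.val : ℤ))) with hk' | hk'
    · -- grid neighbour q = p + (1,0), not adjacent: sA H q = 1/4
      have ha : sA H q = 1/4 := by
        apply sA_quarter (r := p) (fun hadj => hnadj hadj.symm) <;> omega
      have hkk : kP q = kP p + 1 := by rw [hkq, hk']; push_cast; ring
      rw [ha, hkk]; linarith
    · have : kP p + 3 ≤ kP q := by
        rw [hkq]
        have : ((3:ℤ) : ℝ) ≤ ((((q.1.val : ℤ) + (q.2.val : ℤ)) - ((p.1.val : ℤ) + (p.2.val : ℤ)) : ℤ) : ℝ) :=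
          Int.cast_le.mpr hk'
        push_cast at this ⊢; linarith
      linarith [bA0q]
  · -- C5 swapped : (q,p) with d_p = d_q - 1, k_p ≥ k_q + 1
    have hd1 : dP p = dP q - 1 := by rw [hdq, h]; push_cast; ring
    have hk1 : kP q + 1 ≤ kP p := by
      rw [hkq]
      have : ((((q.1.val : ℤ) + (q.2.val : ℤ)) - ((p.1.val : ℤ) + (p.2.val : ℤ)) : ℤ) : ℝ) ≤ ((-1:ℤ) : ℝ) :=
        Int.cast_le.mpr hk
      push_cast at this ⊢; linarith
    refine ⟨(caseC5 bA0q bA1q bB0q bB1q bA0p bA1p bB0p bB1p hd1 hk1).1.symm, fun hnadj ht => ?_⟩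
    refine (caseC5 bA0q bA1q bB0q bB1q bA0p bA1p bB0p bB1p hd1 hk1).2 ?_ (touches_symm ht)
    rcases (by omega : ((q.1.val : ℤ) + (q.2.val : ℤ)) - ((p.1.val : ℤ) + (p.2.val : ℤ)) = -1 ∨
        ((q.1.val : ℤ) + (q.2.val : ℤ)) - ((p.1.val : ℤ) + (p.2.val : ℤ)) ≤ -3) with hk' | hk'
    · -- p = q + (0,1) : p's UR neighbour is q; not adjacent: sB H p = 1/4
      have hb : sB H p = 1/4 := by
        apply sB_quarter (r := q) hnadj <;> omega
      have hkk : kP p = kP q + 1 := by rw [hk'] at hkq; push_cast at hkq; linarith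
      rw [hb, hkk]; linarith
    · have : kP q + 3 ≤ kP p := by
        rw [hkq]
        have : ((((q.1.val : ℤ) + (q.2.val : ℤ)) - ((p.1.val : ℤ) + (p.2.val : ℤ)) : ℤ) : ℝ) ≤ ((-3:ℤ) : ℝ) :=
          Int.cast_le.mpr hk'
        push_cast at this ⊢; linarith
      linarith [bB0p]
  · -- C5 : d' = d-1, k' ≥ k+1
    have hd1 : dP q = dP p - 1 := by rw [hdq, h]; push_cast; ring
    have hk1 : kP p + 1 ≤ kP q := by
      rw [hkq]
      have : ((1:ℤ) : ℝ) ≤ ((((q.1.val : ℤ) + (q.2.val : ℤ)) - ((p.1.val : ℤ) + (p.2.val : ℤ)) : ℤ) : ℝ) :=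
        Int.cast_le.mpr hk
      push_cast at this ⊢; linarith
    refine ⟨(caseC5 bA0p bA1p bB0p bB1p bA0q bA1q bB0q bB1q hd1 hk1).1, fun hnadj => ?_⟩
    refine (caseC5 bA0p bA1p bB0p bB1p bA0q bA1q bB0q bB1q hd1 hk1).2 ?_
    rcases (by omega : ((q.1.val : ℤ) + (q.2.val : ℤ)) - ((p.1.val : ℤ) + (p.2.val : ℤ)) = 1 ∨
        3 ≤ ((q.1.val : ℤ) + (q.2.val : ℤ)) - ((p.1.val : ℤ) + (p.2.val : ℤ))) with hk' | hk'
    · -- q = p + (0,1) : q's UR neighbour is p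
      have hb : sB H q = 1/4 := by
        apply sB_quarter (r := p) (fun hadj => hnadj hadj.symm) <;> omega
      have hkk : kP q = kP p + 1 := by rw [hkq, hk']; push_cast; ring
      rw [hb, hkk]; linarith
    · have : kP p + 3 ≤ kP q := by
        rw [hkq]
        have : ((3:ℤ) : ℝ) ≤ ((((q.1.val : ℤ) + (q.2.val : ℤ)) - ((p.1.val : ℤ) + (p.2.val : ℤ)) : ℤ) : ℝ) :=
          Int.cast_le.mpr hk'
        push_cast at this ⊢; linarith
      linarith [bB0q]
  · -- C4 swapped : (q,p) with d_p = d_q + 1, k_p ≥ k_q + 1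
    have hd1 : dP p = dP q + 1 := by rw [hdq, h]; push_cast; ring
    have hk1 : kP q + 1 ≤ kP p := by
      rw [hkq]
      have : ((((q.1.val : ℤ) + (q.2.val : ℤ)) - ((p.1.val : ℤ) + (p.2.val : ℤ)) : ℤ) : ℝ) ≤ ((-1:ℤ) : ℝ) :=
        Int.cast_le.mpr hk
      push_cast at this ⊢; linarith
    refine ⟨(caseC4 bA0q bA1q bB0q bB1q bA0p bA1p bB0p bB1p hd1 hk1).1.symm, fun hnadj ht => ?_⟩
    refine (caseC4 bA0q bA1q bB0q bB1q bA0p bA1p bB0p bB1p hd1 hk1).2 ?_ (touches_symm ht)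
    rcases (by omega : ((q.1.val : ℤ) + (q.2.val : ℤ)) - ((p.1.val : ℤ) + (p.2.val : ℤ)) = -1 ∨
        ((q.1.val : ℤ) + (q.2.val : ℤ)) - ((p.1.val : ℤ) + (p.2.val : ℤ)) ≤ -3) with hk' | hk'
    · -- p = q + (1,0) : p's UL neighbour is q
      have ha : sA H p = 1/4 := by
        apply sA_quarter (r := q) hnadj <;> omega
      have hkk : kP p = kP q + 1 := by rw [hk'] at hkq; push_cast at hkq; linarith
      rw [ha, hkk]; linarith
    · have : kP q + 3 ≤ kP p := by
        rw [hkq]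
        have : ((((q.1.val : ℤ) + (q.2.val : ℤ)) - ((p.1.val : ℤ) + (p.2.val : ℤ)) : ℤ) : ℝ) ≤ ((-3:ℤ) : ℝ) :=
          Int.cast_le.mpr hk'
        push_cast at this ⊢; linarith
      linarith [bA0p]

end
end TTAux
namespace TTAux
noncomputable section

variable {m n : ℕ}

lemma touch_edge_h (H : SimpleGraph (Fin m × Fin n)) {p q : Fin m × Fin n} (hadj : H.Adj p q)
    (h1 : (q.1.val : ℤ) = (p.1.val : ℤ) + 1) (h2 : (q.2.val : ℤ) = (p.2.val : ℤ)) :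
    Touches (TS H p) (TS H q) := by
  have c1 : (q.1.val : ℝ) = (p.1.val : ℝ) + 1 := by exact_mod_cast h1
  have c2 : (q.2.val : ℝ) = (p.2.val : ℝ) := by exact_mod_cast h2
  have e1 : dP q = dP p + 1 := by unfold dP; rw [c1, c2]; ring
  have e2 : kP q = kP p + 1 := by unfold kP; rw [c1, c2]; ring
  have e3 : sA H q = 0 := sA_zero hadj.symm (by omega) (by omega)
  have key := touchA1 (d := dP p) (k := kP p) (b' := sB H q)
    (sA_nonneg H p) (sA_le H p) (sB_nonneg H p) (sB_le H p) (sB_nonneg H q) (sB_le H q)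
  unfold TS
  rw [e1, e2, e3]
  exact key

lemma touch_edge_v (H : SimpleGraph (Fin m × Fin n)) {p q : Fin m × Fin n} (hadj : H.Adj p q)
    (h1 : (q.1.val : ℤ) = (p.1.val : ℤ)) (h2 : (q.2.val : ℤ) = (p.2.val : ℤ) + 1) :
    Touches (TS H p) (TS H q) := by
  have c1 : (q.1.val : ℝ) = (p.1.val : ℝ) := by exact_mod_cast h1
  have c2 : (q.2.val : ℝ) = (p.2.val : ℝ) + 1 := by exact_mod_cast h2
  have e1 : dP q = dP p - 1 := by unfold dP; rw [c1, c2]; ring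
  have e2 : kP q = kP p + 1 := by unfold kP; rw [c1, c2]; ring
  have e3 : sB H q = 0 := sB_zero hadj.symm (by omega) (by omega)
  have key := touchA2 (d := dP p) (k := kP p) (a' := sA H q)
    (sA_nonneg H p) (sA_le H p) (sB_nonneg H p) (sB_le H p) (sA_nonneg H q) (sA_le H q)
  unfold TS
  rw [e1, e2, e3]
  exact key

end
end TTAux

/-- Every subgraph of the m × n square grid graph has a touching triangle
representation. -/
theorem squareGrid_subgraph_has_TTRep (m n : ℕ) (H : SimpleGraph (Fin m × Fin n))
    (hsub : ∀ p q : Fin m × Fin n, H.Adj p q →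
      |(p.1 : ℤ) - (q.1 : ℤ)| + |(p.2 : ℤ) - (q.2 : ℤ)| = 1) :
    Nonempty (TTRep H) := by
  refine ⟨⟨fun p => TTAux.triOf H p, ?_, ?_⟩⟩
  · intro u v huv
    exact (TTAux.main_pair H u v huv).1
  · intro u v huv
    constructor
    · intro hadj
      have habs := hsub u v hadj
      rcases abs_cases ((u.1 : ℤ) - (v.1 : ℤ)) with ⟨h1, h1s⟩ | ⟨h1, h1s⟩ <;>
        rcases abs_cases ((u.2 : ℤ) - (v.2 : ℤ)) with ⟨h2, h2s⟩ | ⟨h2, h2s⟩ <;>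
        rw [h1, h2] at habs
      all_goals {
        rcases (by omega :
            ((v.1.val : ℤ) = (u.1.val : ℤ) + 1 ∧ (v.2.val : ℤ) = (u.2.val : ℤ)) ∨
            ((u.1.val : ℤ) = (v.1.val : ℤ) + 1 ∧ (u.2.val : ℤ) = (v.2.val : ℤ)) ∨
            ((v.1.val : ℤ) = (u.1.val : ℤ) ∧ (v.2.val : ℤ) = (u.2.val : ℤ) + 1) ∨
            ((u.1.val : ℤ) = (v.1.val : ℤ) ∧ (u.2.val : ℤ) = (v.2.val : ℤ) + 1)) with
          ⟨ha, hb⟩ | ⟨ha, hb⟩ | ⟨ha, hb⟩ | ⟨ha, hb⟩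
        · exact TTAux.touch_edge_h H hadj ha hb
        · exact TTAux.touches_symm (TTAux.touch_edge_h H hadj.symm ha hb)
        · exact TTAux.touch_edge_v H hadj ha hb
        · exact TTAux.touches_symm (TTAux.touch_edge_v H hadj.symm ha hb)
      }
    · intro ht
      by_contra hnadj
      exact (TTAux.main_pair H u v huv).2 hnadj ht
end

section
/- The complete graph K₄ on four vertices admits no triangulation representation; equivalently, there do not exist four triangles in ℝ² with pairwise disjoint interiors such that the intersection of any two of them is a full common side of both. -/
/-- Signed cross product determinant of the triple of points `x, y, z`. -/
def cr (x y z : ℝ × ℝ) : ℝ := (y.1 - x.1) * (z.2 - x.2) - (y.2 - x.2) * (z.1 - x.1)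

lemma cr_self_l (x y : ℝ × ℝ) : cr x y x = 0 := by unfold cr; ring
lemma cr_self_m (x z : ℝ × ℝ) : cr x x z = 0 := by unfold cr; ring
lemma cr_self_r (x y : ℝ × ℝ) : cr x y y = 0 := by unfold cr; ring

lemma cr_ne_zero_of_indep {a b c : ℝ × ℝ} (h : AffineIndependent ℝ ![a, b, c]) :
    cr a b c ≠ 0 := by
  intro hcr
  unfold cr at hcr
  by_cases h1 : a.1 = b.1 ∧ b.1 = c.1
  · by_cases h2 : a.2 = b.2 ∧ b.2 = c.2
    · have hab : a = b := Prod.ext h1.1 h2.1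
      have h01 : (0 : Fin 3) ≠ 1 := by decide
      exact h01 (h.injective (by simp [hab]))
    · have key := affineIndependent_iff.1 h Finset.univ ![b.2 - c.2, c.2 - a.2, a.2 - b.2]
        (by simp [Fin.sum_univ_three])
        (by
          simp [Fin.sum_univ_three, Prod.ext_iff]
          constructor
          · nlinarith [hcr]
          · ring)
      have k0 := key 0 (by simp)
      have k1 := key 1 (by simp)
      simp at k0 k1
      exact h2 ⟨by linarith, by linarith⟩
  · have key := affineIndependent_iff.1 h Finset.univ ![b.1 - c.1, c.1 - a.1, a.1 - b.1]
      (by simp [Fin.sum_univ_three])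
      (by
        simp [Fin.sum_univ_three, Prod.ext_iff]
        constructor
        · ring
        · nlinarith [hcr])
    have k0 := key 0 (by simp)
    have k1 := key 1 (by simp)
    simp at k0 k1
    exact h1 ⟨by linarith, by linarith⟩

lemma combo_mem_hull (x y r : ℝ × ℝ) (α β γ : ℝ) (hα : 0 ≤ α) (hβ : 0 ≤ β) (hγ : 0 ≤ γ)
    (hsum : α + β + γ = 1) : α • x + β • y + γ • r ∈ convexHull ℝ ({x, y, r} : Set (ℝ × ℝ)) := by
  have h := (convex_convexHull ℝ ({x, y, r} : Set (ℝ × ℝ))).sum_mem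
    (t := Finset.univ) (w := ![α, β, γ]) (z := ![x, y, r])
    (by intro i _; fin_cases i <;> simpa)
    (by simp [Fin.sum_univ_three, hsum])
    (by intro i _; fin_cases i <;> exact subset_convexHull ℝ _ (by simp))
  rw [Fin.sum_univ_three] at h
  simpa using h

/-- Barycentric representation of a point w.r.t. an affine basis of the plane. -/
lemma bary (x y r t : ℝ × ℝ) (h : cr x y r ≠ 0) :
    ∃ c₁ c₂ : ℝ, t = c₁ • x + c₂ • y + (cr x y t / cr x y r) • r ∧
      c₁ + c₂ + (cr x y t / cr x y r) = 1 := by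
  set c₃ : ℝ := cr x y t / cr x y r with hc3
  refine ⟨1 - (cr x t r / cr x y r) - c₃, cr x t r / cr x y r, ?_, by ring⟩
  have e1 : (cr x t r / cr x y r) * (y.1 - x.1) + c₃ * (r.1 - x.1) = t.1 - x.1 := by
    rw [hc3]; field_simp; unfold cr; ring
  have e2 : (cr x t r / cr x y r) * (y.2 - x.2) + c₃ * (r.2 - x.2) = t.2 - x.2 := by
    rw [hc3]; field_simp; unfold cr; ring
  apply Prod.ext <;> simp [Prod.fst_add, Prod.snd_add] <;> nlinarith [e1, e2]

/-- Three points of a segment have zero cross product. -/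
lemma cr_seg {x' y' p q z : ℝ × ℝ} (hp : p ∈ segment ℝ x' y') (hq : q ∈ segment ℝ x' y')
    (hz : z ∈ segment ℝ x' y') : cr p q z = 0 := by
  obtain ⟨a1, b1, _, _, hab1, h1⟩ := hp
  obtain ⟨a2, b2, _, _, hab2, h2⟩ := hq
  obtain ⟨a3, b3, _, _, hab3, h3⟩ := hz
  have e1 : a1 = 1 - b1 := by linarith
  have e2 : a2 = 1 - b2 := by linarith
  have e3 : a3 = 1 - b3 := by linarith
  subst e1 e2 e3
  rw [← h1, ← h2, ← h3]
  unfold cr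
  simp [Prod.fst_add, Prod.snd_add, Prod.smul_fst, Prod.smul_snd, smul_eq_mul]
  ring

/-- The third vertex of a triangle relative to two given distinct vertices. -/
lemma third_vertex (T : Triangle) {x y : ℝ × ℝ} (hx : T.IsVertex x) (hy : T.IsVertex y)
    (hxy : x ≠ y) : ∃ r, T.IsVertex r ∧ ({x, y, r} : Set (ℝ × ℝ)) = {T.a, T.b, T.c} ∧
      cr x y r ≠ 0 := by
  have hcr := cr_ne_zero_of_indep T.indep
  have c1 : cr T.b T.a T.c = -cr T.a T.b T.c := by unfold cr; ring
  have c2 : cr T.a T.c T.b = -cr T.a T.b T.c := by unfold cr; ring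
  have c3 : cr T.c T.b T.a = -cr T.a T.b T.c := by unfold cr; ring
  have c4 : cr T.b T.c T.a = cr T.a T.b T.c := by unfold cr; ring
  have c5 : cr T.c T.a T.b = cr T.a T.b T.c := by unfold cr; ring
  rcases hx with rfl | rfl | rfl <;> rcases hy with rfl | rfl | rfl
  · exact absurd rfl hxy
  · exact ⟨T.c, Or.inr (Or.inr rfl), rfl, hcr⟩
  · exact ⟨T.b, Or.inr (Or.inl rfl), by ext z; simp; tauto, by rw [c2]; simpa⟩
  · exact ⟨T.c, Or.inr (Or.inr rfl), by ext z; simp; tauto, by rw [c1]; simpa⟩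
  · exact absurd rfl hxy
  · exact ⟨T.a, Or.inl rfl, by ext z; simp; tauto, by rw [c4]; simpa⟩
  · exact ⟨T.b, Or.inr (Or.inl rfl), by ext z; simp; tauto, by rw [c5]; simpa⟩
  · exact ⟨T.a, Or.inl rfl, by ext z; simp; tauto, by rw [c3]; simpa⟩
  · exact absurd rfl hxy

/-- A triangle, as a set, is the hull of any enumeration of its vertex set. -/
lemma toSet_eq_of_vertices (T : Triangle) {x y r : ℝ × ℝ}
    (h : ({x, y, r} : Set (ℝ × ℝ)) = {T.a, T.b, T.c}) :
    T.toSet = convexHull ℝ {x, y, r} := by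
  rw [Triangle.toSet, h]

/-- Core geometric lemma: two triangles sharing vertices `x, y`, whose
intersection is a segment, have third vertices strictly on opposite sides of line `xy`. -/
lemma core {x y rv rw : ℝ × ℝ} {Sv Sw : Set (ℝ × ℝ)}
    (hSv : Sv = convexHull ℝ {x, y, rv}) (hcv : cr x y rv ≠ 0)
    (hSw : Sw = convexHull ℝ {x, y, rw}) (hcw : cr x y rw ≠ 0)
    (hseg : ∃ x' y', Sv ∩ Sw = segment ℝ x' y') :
    cr x y rv * cr x y rw < 0 := by
  by_contra hcon
  push_neg at hcon
  have hprod : 0 < cr x y rv * cr x y rw := by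
    rcases lt_or_eq_of_le hcon with h | h
    · exact h
    · exact absurd h.symm (mul_ne_zero hcv hcw)
  have hc3 : 0 < cr x y rw / cr x y rv := by
    rcases mul_pos_iff.1 hprod with ⟨h1, h2⟩ | ⟨h1, h2⟩
    · exact div_pos h2 h1
    · exact div_pos_of_neg_of_neg h2 h1
  obtain ⟨c₁, c₂, hrw, hsum⟩ := bary x y rv rw hcv
  set c₃ : ℝ := cr x y rw / cr x y rv with hc3def
  set K : ℝ := 1 + |c₁| + |c₂| with hKdef
  have hK1 : 1 ≤ K := by nlinarith [abs_nonneg c₁, abs_nonneg c₂]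
  set l : ℝ := 1 / (4 * K) with hldef
  have hl0 : 0 < l := by positivity
  have hlK : l * K = 1 / 4 := by rw [hldef]; field_simp
  have hl4 : l ≤ 1 / 4 := by
    calc l = l * 1 := (mul_one l).symm
    _ ≤ l * K := by nlinarith
    _ = 1 / 4 := hlK
  have hlc1 : l * |c₁| ≤ 1 / 4 := by nlinarith [abs_nonneg c₁, abs_nonneg c₂]
  have hlc2 : l * |c₂| ≤ 1 / 4 := by nlinarith [abs_nonneg c₁, abs_nonneg c₂]
  set z : ℝ × ℝ := ((1 - l) / 2) • x + ((1 - l) / 2) • y + l • rw with hzdef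
  have hzw : z ∈ Sw := by
    rw [hSw]
    exact combo_mem_hull x y rw _ _ _ (by linarith) (by linarith) (by linarith) (by ring)
  have hzv : z ∈ Sv := by
    have hzalt : z = ((1 - l) / 2 + l * c₁) • x + ((1 - l) / 2 + l * c₂) • y + (l * c₃) • rv := by
      rw [hzdef, hrw]; module
    rw [hSv, hzalt]
    exact combo_mem_hull x y rv _ _ _
      (by nlinarith [neg_abs_le c₁]) (by nlinarith [neg_abs_le c₂])
      (by positivity) (by linear_combination l * hsum)
  obtain ⟨x', y', hI⟩ := hseg
  have hxm : x ∈ Sv ∩ Sw := by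
    constructor
    · rw [hSv]; exact subset_convexHull ℝ _ (by simp)
    · rw [hSw]; exact subset_convexHull ℝ _ (by simp)
  have hym : y ∈ Sv ∩ Sw := by
    constructor
    · rw [hSv]; exact subset_convexHull ℝ _ (by simp)
    · rw [hSw]; exact subset_convexHull ℝ _ (by simp)
  have hzm : z ∈ Sv ∩ Sw := ⟨hzv, hzw⟩
  rw [hI] at hxm hym hzm
  have hcrz : cr x y z = 0 := cr_seg hxm hym hzm
  have hz1 : z.1 = (1 - l) / 2 * x.1 + (1 - l) / 2 * y.1 + l * rw.1 := by
    rw [hzdef]; simp [Prod.fst_add, Prod.smul_fst, smul_eq_mul]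
  have hz2 : z.2 = (1 - l) / 2 * x.2 + (1 - l) / 2 * y.2 + l * rw.2 := by
    rw [hzdef]; simp [Prod.snd_add, Prod.smul_snd, smul_eq_mul]
  have : cr x y z = l * cr x y rw := by unfold cr; rw [hz1, hz2]; ring
  rw [hcrz] at this
  exact hcw (by nlinarith [this])

lemma extremal_dir (s : Finset (ℝ × ℝ)) (hne : s.Nonempty)
    (hA : ∀ d ∈ s, d.1 < 0 ∨ (d.1 = 0 ∧ d.2 < 0)) :
    ∃ d₀ ∈ s, ∀ d ∈ s, d₀.1 * d.2 - d₀.2 * d.1 ≤ 0 := by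
  by_cases hv : ∃ d ∈ s, d.1 = 0
  · obtain ⟨d₀, hd₀s, hd₀⟩ := hv
    have hd₀2 : d₀.2 < 0 := by
      rcases hA d₀ hd₀s with h | h
      · linarith
      · exact h.2
    refine ⟨d₀, hd₀s, fun d hd => ?_⟩
    rcases hA d hd with h | h
    · rw [hd₀]; nlinarith
    · rw [hd₀, h.1]; ring_nf; simp
  · push_neg at hv
    obtain ⟨d₀, hd₀s, hmin⟩ := Finset.exists_min_image s (fun d => d.2 / (-d.1)) hne
    refine ⟨d₀, hd₀s, fun d hd => ?_⟩
    have h1 : d₀.1 < 0 := by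
      rcases hA d₀ hd₀s with h | h
      · exact h
      · exact absurd h.1 (hv _ hd₀s)
    have h2 : d.1 < 0 := by
      rcases hA d hd with h | h
      · exact h
      · exact absurd h.1 (hv _ hd)
    have := hmin d hd
    rw [div_le_div_iff₀ (by linarith) (by linarith)] at this
    nlinarith

lemma pigeon {α : Type*} {a b c ρ r₁ r₂ r₃ : α}
    (hρ : ρ = a ∨ ρ = b ∨ ρ = c) (h1 : r₁ = a ∨ r₁ = b ∨ r₁ = c)
    (h2 : r₂ = a ∨ r₂ = b ∨ r₂ = c) (h3 : r₃ = a ∨ r₃ = b ∨ r₃ = c)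
    (d12 : r₁ ≠ r₂) (d13 : r₁ ≠ r₃) (d23 : r₂ ≠ r₃) :
    r₁ = ρ ∨ r₂ = ρ ∨ r₃ = ρ := by
  rcases hρ with rfl | rfl | rfl <;> rcases h1 with rfl | rfl | rfl <;>
    rcases h2 with rfl | rfl | rfl <;> rcases h3 with rfl | rfl | rfl <;> tauto

/-- The complete graph on four vertices admits no triangulation representation. -/
theorem K4_no_triangulationRep : IsEmpty (TriangulationRep (⊤ : SimpleGraph (Fin 4))) := by
  constructor
  intro R
  classical
  set t : Fin 4 → Triangle := R.tri with ht
  -- every pair of triangles shares a full side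
  have shared : ∀ u v : Fin 4, u ≠ v → ∃ x y : ℝ × ℝ, x ≠ y ∧
      (t u).IsVertex x ∧ (t u).IsVertex y ∧ (t v).IsVertex x ∧ (t v).IsVertex y ∧
      (t u).toSet ∩ (t v).toSet = segment ℝ x y := by
    intro u v huv
    have hadj : (⊤ : SimpleGraph (Fin 4)).Adj u v := by simpa using huv
    have htou : Touches (t u).toSet (t v).toSet := (R.adj_iff u v huv).1 hadj
    obtain ⟨x, y, ⟨hxy, hxu, hyu⟩, ⟨_, hxv, hyv⟩, heq⟩ := R.full_side u v huv htou
    exact ⟨x, y, hxy, hxu, hyu, hxv, hyv, heq⟩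
  have SH : ∀ u v : Fin 4, u ≠ v → ∃ x' y' : ℝ × ℝ,
      (t u).toSet ∩ (t v).toSet = segment ℝ x' y' := by
    intro u v huv
    obtain ⟨x, y, _, _, _, _, _, heq⟩ := shared u v huv
    exact ⟨x, y, heq⟩
  -- every pair of distinct vertices of a triangle is shared with another triangle
  have pair_shared : ∀ u : Fin 4, ∀ p q : ℝ × ℝ, p ≠ q →
      (t u).IsVertex p → (t u).IsVertex q →
      ∃ v : Fin 4, v ≠ u ∧ (t v).IsVertex p ∧ (t v).IsVertex q := by
    intro u p q hpq hp hq
    obtain ⟨o₁, o₂, o₃, ho₁, ho₂, ho₃, h12, h13, h23⟩ :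
        ∃ o₁ o₂ o₃ : Fin 4, o₁ ≠ u ∧ o₂ ≠ u ∧ o₃ ≠ u ∧ o₁ ≠ o₂ ∧ o₁ ≠ o₃ ∧ o₂ ≠ o₃ := by
      fin_cases u
      · exact ⟨1, 2, 3, by decide, by decide, by decide, by decide, by decide, by decide⟩
      · exact ⟨0, 2, 3, by decide, by decide, by decide, by decide, by decide, by decide⟩
      · exact ⟨0, 1, 3, by decide, by decide, by decide, by decide, by decide, by decide⟩
      · exact ⟨0, 1, 2, by decide, by decide, by decide, by decide, by decide, by decide⟩
    -- shared sides with the three other triangles, and their third vertices in t u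
    obtain ⟨x₁, y₁, hxy₁, hx₁u, hy₁u, hx₁o, hy₁o, _⟩ := shared u o₁ (Ne.symm ho₁)
    obtain ⟨x₂, y₂, hxy₂, hx₂u, hy₂u, hx₂o, hy₂o, _⟩ := shared u o₂ (Ne.symm ho₂)
    obtain ⟨x₃, y₃, hxy₃, hx₃u, hy₃u, hx₃o, hy₃o, _⟩ := shared u o₃ (Ne.symm ho₃)
    obtain ⟨r₁, hr₁v, hr₁s, hr₁c⟩ := third_vertex (t u) hx₁u hy₁u hxy₁
    obtain ⟨r₂, hr₂v, hr₂s, hr₂c⟩ := third_vertex (t u) hx₂u hy₂u hxy₂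
    obtain ⟨r₃, hr₃v, hr₃s, hr₃c⟩ := third_vertex (t u) hx₃u hy₃u hxy₃
    obtain ⟨ρ, hρv, hρs, hρc⟩ := third_vertex (t u) hp hq hpq
    -- distinctness of the r's
    have key : ∀ (i j : Fin 4) (xi yi xj yj ri rj : ℝ × ℝ), i ≠ u → j ≠ u → i ≠ j →
        (t u).IsVertex xi → (t u).IsVertex yi →
        (t i).IsVertex xi → (t i).IsVertex yi →
        (t j).IsVertex xj → (t j).IsVertex yj →
        ({xi, yi, ri} : Set (ℝ × ℝ)) = {(t u).a, (t u).b, (t u).c} → cr xi yi ri ≠ 0 →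
        ({xj, yj, rj} : Set (ℝ × ℝ)) = {(t u).a, (t u).b, (t u).c} → cr xj yj rj ≠ 0 →
        ri ≠ rj := by
      intro i j xi yi xj yj ri rj hi hj hij hxiu hyiu hxii hyii hxjj hyjj hsi hci hsj hcj hrr
      subst hrr
      have hxir : xi ≠ ri := fun h => hci (h ▸ cr_self_l xi yi)
      have hyir : yi ≠ ri := fun h => hci (h ▸ cr_self_r xi yi)
      -- xi, yi are vertices of t j as well
      have hmem : ∀ w : ℝ × ℝ, (t u).IsVertex w → w ≠ ri → (t j).IsVertex w := by
        intro w hw hwr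
        have hw' : w ∈ ({(t u).a, (t u).b, (t u).c} : Set (ℝ × ℝ)) := by
          rcases hw with rfl | rfl | rfl <;> simp
        rw [← hsj] at hw'
        rcases hw' with rfl | rfl | rfl
        · exact hxjj
        · exact hyjj
        · exact absurd rfl hwr
      have hxij : (t j).IsVertex xi := hmem xi hxiu hxir
      have hyij : (t j).IsVertex yi := hmem yi hyiu hyir
      have hxiyi : xi ≠ yi := by
        intro h
        exact hci (h ▸ cr_self_m xi ri)
      -- third vertices of t i and t j w.r.t. (xi, yi)
      obtain ⟨si, hsiv, hsis, hsic⟩ := third_vertex (t i) hxii hyii hxiyi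
      obtain ⟨sj, hsjv, hsjs, hsjc⟩ := third_vertex (t j) hxij hyij hxiyi
      have c1 := core (toSet_eq_of_vertices (t u) hsi) hci
        (toSet_eq_of_vertices (t i) hsis) hsic (SH u i (Ne.symm hi))
      have c2 := core (toSet_eq_of_vertices (t u) hsi) hci
        (toSet_eq_of_vertices (t j) hsjs) hsjc (SH u j (Ne.symm hj))
      have c3 := core (toSet_eq_of_vertices (t i) hsis) hsic
        (toSet_eq_of_vertices (t j) hsjs) hsjc (SH i j hij)
      nlinarith [c1, c2, c3, sq_nonneg (cr xi yi ri)]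
    have d12 : r₁ ≠ r₂ := key o₁ o₂ x₁ y₁ x₂ y₂ r₁ r₂ ho₁ ho₂ h12
      hx₁u hy₁u hx₁o hy₁o hx₂o hy₂o hr₁s hr₁c hr₂s hr₂c
    have d13 : r₁ ≠ r₃ := key o₁ o₃ x₁ y₁ x₃ y₃ r₁ r₃ ho₁ ho₃ h13
      hx₁u hy₁u hx₁o hy₁o hx₃o hy₃o hr₁s hr₁c hr₃s hr₃c
    have d23 : r₂ ≠ r₃ := key o₂ o₃ x₂ y₂ x₃ y₃ r₂ r₃ ho₂ ho₃ h23
      hx₂u hy₂u hx₂o hy₂o hx₃o hy₃o hr₂s hr₂c hr₃s hr₃c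
    -- pigeonhole: one of the r's equals ρ
    have hpig : r₁ = ρ ∨ r₂ = ρ ∨ r₃ = ρ := pigeon hρv hr₁v hr₂v hr₃v d12 d13 d23
    have hfin : ∀ (k : Fin 4) (xk yk rk : ℝ × ℝ), k ≠ u → (t k).IsVertex xk →
        (t k).IsVertex yk → ({xk, yk, rk} : Set (ℝ × ℝ)) = {(t u).a, (t u).b, (t u).c} →
        cr xk yk rk ≠ 0 → rk = ρ →
        ∃ v : Fin 4, v ≠ u ∧ (t v).IsVertex p ∧ (t v).IsVertex q := by
      intro k xk yk rk hk hxk hyk hsk hck hkρ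
      subst hkρ
      have hpρ : p ≠ rk := fun h => hρc (h ▸ cr_self_l p q)
      have hqρ : q ≠ rk := fun h => hρc (h ▸ cr_self_r p q)
      have hmem : ∀ w : ℝ × ℝ, (t u).IsVertex w → w ≠ rk → (t k).IsVertex w := by
        intro w hw hwρ
        have hw' : w ∈ ({(t u).a, (t u).b, (t u).c} : Set (ℝ × ℝ)) := by
          rcases hw with rfl | rfl | rfl <;> simp
        rw [← hsk] at hw'
        rcases hw' with rfl | rfl | rfl
        · exact hxk
        · exact hyk
        · exact absurd rfl hwρ
      exact ⟨k, hk, hmem p hp hpρ, hmem q hq hqρ⟩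
    rcases hpig with h | h | h
    · exact hfin o₁ x₁ y₁ r₁ ho₁ hx₁o hy₁o hr₁s hr₁c h
    · exact hfin o₂ x₂ y₂ r₂ ho₂ hx₂o hy₂o hr₂s hr₂c h
    · exact hfin o₃ x₃ y₃ r₃ ho₃ hx₃o hy₃o hr₃s hr₃c h
  -- the lexicographically maximal vertex
  set vt : Fin 4 → Fin 3 → ℝ × ℝ := fun v => ![(t v).a, (t v).b, (t v).c] with hvt
  have hvtv : ∀ v i, (t v).IsVertex (vt v i) := by
    intro v i
    fin_cases i
    · exact Or.inl rfl
    · exact Or.inr (Or.inl rfl)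
    · exact Or.inr (Or.inr rfl)
  have hvts : ∀ (v : Fin 4) (q : ℝ × ℝ), (t v).IsVertex q → ∃ i, q = vt v i := by
    intro v q hq
    rcases hq with rfl | rfl | rfl
    · exact ⟨0, rfl⟩
    · exact ⟨1, rfl⟩
    · exact ⟨2, rfl⟩
  obtain ⟨vi₀, -, hmax⟩ := Finset.exists_max_image (Finset.univ : Finset (Fin 4 × Fin 3))
    (fun vi => toLex (vt vi.1 vi.2)) ⟨(0, 0), Finset.mem_univ _⟩
  set v₀ : Fin 4 := vi₀.1 with hv₀
  set p : ℝ × ℝ := vt vi₀.1 vi₀.2 with hpdef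
  have hpv : (t v₀).IsVertex p := hvtv _ _
  have hlex : ∀ (v : Fin 4) (q : ℝ × ℝ), (t v).IsVertex q → q ≠ p →
      (q - p).1 < 0 ∨ ((q - p).1 = 0 ∧ (q - p).2 < 0) := by
    intro v q hq hqp
    obtain ⟨i, rfl⟩ := hvts v q hq
    have h := hmax (v, i) (Finset.mem_univ _)
    simp only [Prod.Lex.le_iff] at h
    rcases h with h | ⟨h1, h2⟩
    · left; simpa using sub_neg.2 h
    · right
      refine ⟨by simpa using sub_eq_zero.2 h1, ?_⟩
      rcases lt_or_eq_of_le h2 with h2 | h2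
      · simpa using sub_neg.2 h2
      · exact absurd (Prod.ext h1 h2) hqp
  -- the finite set of directions from p to other vertices of triangles having p as a vertex
  set S : Finset (Fin 4 × Fin 3) := Finset.univ.filter
    (fun vi => (t vi.1).IsVertex p ∧ vt vi.1 vi.2 ≠ p) with hS
  set D : Finset (ℝ × ℝ) := S.image (fun vi => vt vi.1 vi.2 - p) with hD
  have memD : ∀ (v : Fin 4) (r : ℝ × ℝ), (t v).IsVertex p → (t v).IsVertex r → r ≠ p →
      r - p ∈ D := by
    intro v r hvp hvr hrp
    obtain ⟨i, rfl⟩ := hvts v r hvr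
    exact Finset.mem_image.2 ⟨(v, i), Finset.mem_filter.2 ⟨Finset.mem_univ _, hvp, hrp⟩, rfl⟩
  have habd : (t v₀).a ≠ (t v₀).b := by
    intro h
    exact cr_ne_zero_of_indep (t v₀).indep (by rw [h]; exact cr_self_m _ _)
  have hDne : D.Nonempty := by
    have hj : ∃ j, vt v₀ j ≠ p := by
      by_contra h
      push_neg at h
      exact habd ((h 0).trans (h 1).symm)
    obtain ⟨j₀, hj₀⟩ := hj
    exact ⟨vt v₀ j₀ - p, memD v₀ (vt v₀ j₀) hpv (hvtv _ _) hj₀⟩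
  have hDA : ∀ d ∈ D, d.1 < 0 ∨ (d.1 = 0 ∧ d.2 < 0) := by
    intro d hd
    obtain ⟨vi, hvi, rfl⟩ := Finset.mem_image.1 hd
    obtain ⟨-, -, hne⟩ := Finset.mem_filter.1 hvi
    exact hlex vi.1 _ (hvtv _ _) hne
  obtain ⟨d₀, hd₀D, hmin⟩ := extremal_dir D hDne hDA
  obtain ⟨wi, hwi, hd₀⟩ := Finset.mem_image.1 hd₀D
  obtain ⟨-, hwp, hwq⟩ := Finset.mem_filter.1 hwi
  set w : Fin 4 := wi.1 with hwdef
  set q₀ : ℝ × ℝ := vt wi.1 wi.2 with hq₀def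
  have hq₀v : (t w).IsVertex q₀ := hvtv _ _
  have hpq : p ≠ q₀ := Ne.symm hwq
  obtain ⟨r₁, hr₁v, hr₁s, hr₁c⟩ := third_vertex (t w) hwp hq₀v hpq
  obtain ⟨v₂, hv₂w, hv₂p, hv₂q⟩ := pair_shared w p q₀ hpq hwp hq₀v
  obtain ⟨r₂, hr₂v, hr₂s, hr₂c⟩ := third_vertex (t v₂) hv₂p hv₂q hpq
  have hcore := core (toSet_eq_of_vertices (t w) hr₁s) hr₁c
    (toSet_eq_of_vertices (t v₂) hr₂s) hr₂c (SH w v₂ (Ne.symm hv₂w))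
  have hr₁p : r₁ ≠ p := fun h => hr₁c (by rw [h]; exact cr_self_l p q₀)
  have hr₂p : r₂ ≠ p := fun h => hr₂c (by rw [h]; exact cr_self_l p q₀)
  have m1 := hmin (r₁ - p) (memD w r₁ hwp hr₁v hr₁p)
  have m2 := hmin (r₂ - p) (memD v₂ r₂ hv₂p hr₂v hr₂p)
  have e1 : d₀.1 * (r₁ - p).2 - d₀.2 * (r₁ - p).1 = cr p q₀ r₁ := by
    rw [← hd₀]
    simp only [cr, Prod.fst_sub, Prod.snd_sub]
    try ring
  have e2 : d₀.1 * (r₂ - p).2 - d₀.2 * (r₂ - p).1 = cr p q₀ r₂ := by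
    rw [← hd₀]
    simp only [cr, Prod.fst_sub, Prod.snd_sub]
    try ring
  rw [e1] at m1
  rw [e2] at m2
  nlinarith [hcore, m1, m2]
end

section
/- Let T₀, T₁, and T be triangles in ℝ² with pairwise disjoint interiors. Suppose T touches both T₀ and T₁, and the contact segments T ∩ T₀ and T ∩ T₁ are contained in two distinct sides a and b of T. Let s₀ be the side of T₀ containing T ∩ T₀ and s₁ the side of T₁ containing T ∩ T₁, let L₀ and L₁ be the lines through s₀ and s₁ respectively, and let p be the common vertex of the sides a and b of T. Then L₀ and L₁ are distinct lines meeting exactly at p, and the intersection is feasible: some nondegenerate subsegment of s₀ lies strictly on the side of L₁ opposite to the interior of T₁, and some nondegenerate subsegment of s₁ lies strictly on the side of L₀ opposite to the interior of T₀. -/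
noncomputable section

/-- signed area functional: cross product of (b-a) and (z-a). -/
def sd (a b z : ℝ × ℝ) : ℝ := (b.1-a.1)*(z.2-a.2)-(b.2-a.2)*(z.1-a.1)

lemma sd_cyclic (a b c : ℝ × ℝ) : sd a b c = sd b c a := by unfold sd; ring

lemma sd_self_left (a b : ℝ × ℝ) : sd a b a = 0 := by unfold sd; ring
lemma sd_self_right (a b : ℝ × ℝ) : sd a b b = 0 := by unfold sd; ring

lemma sd_combo (a b u v : ℝ × ℝ) {α β : ℝ} (h : α + β = 1) :
    sd a b (α • u + β • v) = α * sd a b u + β * sd a b v := by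
  have hβ : β = 1 - α := by linarith
  subst hβ
  simp only [sd, Prod.fst_add, Prod.snd_add, Prod.smul_fst, Prod.smul_snd, smul_eq_mul]
  ring

lemma mem_line_iff {a b : ℝ × ℝ} (hab : a ≠ b) {z : ℝ × ℝ} :
    z ∈ affineSpan ℝ ({a, b} : Set (ℝ × ℝ)) ↔ sd a b z = 0 := by
  constructor
  · intro hz
    have h : z - a + a ∈ affineSpan ℝ ({a, b} : Set (ℝ × ℝ)) := by simpa using hz
    rw [show (z - a + a) = (z - a) +ᵥ a from rfl, vadd_left_mem_affineSpan_pair] at h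
    obtain ⟨r, hr⟩ := h
    have h1 : z.1 - a.1 = r * (b.1 - a.1) := by
      have := congrArg Prod.fst hr; simpa [vsub_eq_sub] using this.symm
    have h2 : z.2 - a.2 = r * (b.2 - a.2) := by
      have := congrArg Prod.snd hr; simpa [vsub_eq_sub] using this.symm
    unfold sd; rw [h1, h2]; ring
  · intro hz
    have h : z = (z - a) +ᵥ a := by simp
    rw [h, vadd_left_mem_affineSpan_pair]
    unfold sd at hz
    by_cases h1 : b.1 - a.1 ≠ 0
    · refine ⟨(z.1 - a.1)/(b.1 - a.1), ?_⟩
      apply Prod.ext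
      · simp [vsub_eq_sub]; field_simp
      · simp [vsub_eq_sub]; field_simp; nlinarith [hz]
    · push_neg at h1
      have h2 : b.2 - a.2 ≠ 0 := by
        intro h2
        apply hab
        apply Prod.ext <;> [linarith; linarith]
      refine ⟨(z.2 - a.2)/(b.2 - a.2), ?_⟩
      apply Prod.ext
      · simp [vsub_eq_sub]; field_simp; nlinarith [hz]
      · simp [vsub_eq_sub]; field_simp

lemma collinear_of_sd_eq_zero {a b c : ℝ × ℝ} (h : sd a b c = 0) :
    Collinear ℝ ({a, b, c} : Set (ℝ × ℝ)) := by
  by_cases hab : a = b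
  · subst hab
    have : ({a, a, c} : Set (ℝ × ℝ)) = {a, c} := by simp
    rw [this]
    exact collinear_pair ℝ a c
  · have hc : c ∈ affineSpan ℝ ({a, b} : Set (ℝ × ℝ)) := (mem_line_iff hab).2 h
    have : ({a, b, c} : Set (ℝ × ℝ)) = {c, a, b} := by
      ext z; simp; tauto
    rw [this]
    exact collinear_insert_of_mem_affineSpan_pair hc

lemma sd_ne_zero_of_not_collinear {a b c : ℝ × ℝ} (h : ¬Collinear ℝ ({a, b, c} : Set (ℝ × ℝ))) :
    sd a b c ≠ 0 := fun h0 => h (collinear_of_sd_eq_zero h0)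

lemma ne_of_not_collinear {a b c : ℝ × ℝ} (h : ¬Collinear ℝ ({a, b, c} : Set (ℝ × ℝ))) :
    a ≠ b ∧ a ≠ c ∧ b ≠ c := by
  refine ⟨?_, ?_, ?_⟩ <;> rintro rfl <;> apply h
  · have : ({a, a, c} : Set (ℝ × ℝ)) = {a, c} := by simp
    rw [this]; exact collinear_pair ℝ a c
  · have : ({a, b, a} : Set (ℝ × ℝ)) = {a, b} := by ext z; simp; tauto
    rw [this]; exact collinear_pair ℝ a b
  · have : ({a, b, b} : Set (ℝ × ℝ)) = {a, b} := by simp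
    rw [this]; exact collinear_pair ℝ a b

/-- membership in a segment as explicit combo -/
lemma seg_param {a b z : ℝ × ℝ} (h : z ∈ segment ℝ a b) :
    ∃ t : ℝ, 0 ≤ t ∧ t ≤ 1 ∧ z = (1-t) • a + t • b := by
  rw [segment_eq_image] at h
  obtain ⟨t, ht, hz⟩ := h
  exact ⟨t, ht.1, ht.2, by rw [← hz]⟩

lemma sd_of_seg {a b u v : ℝ × ℝ} {s t : ℝ}
    (hu : u = (1-s) • a + s • b) (hv : v = (1-t) • a + t • b) (z : ℝ × ℝ) :
    sd u v z = (t - s) * sd a b z := by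
  subst hu hv
  simp only [sd, Prod.fst_add, Prod.snd_add, Prod.smul_fst, Prod.smul_snd, smul_eq_mul]
  ring

lemma span_pair_eq_of_seg {a b u v : ℝ × ℝ} (hab : a ≠ b) (huv : u ≠ v)
    (hu : u ∈ segment ℝ a b) (hv : v ∈ segment ℝ a b) :
    affineSpan ℝ ({u, v} : Set (ℝ × ℝ)) = affineSpan ℝ ({a, b} : Set (ℝ × ℝ)) := by
  obtain ⟨s, _, _, hus⟩ := seg_param hu
  obtain ⟨t, _, _, hvt⟩ := seg_param hv
  have hst : t - s ≠ 0 := by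
    intro h
    have : s = t := by linarith
    exact huv (by rw [hus, hvt, this])
  ext z
  rw [mem_line_iff huv, mem_line_iff hab, sd_of_seg hus hvt z, mul_eq_zero]
  constructor
  · rintro (h | h)
    · exact absurd h hst
    · exact h
  · intro h; right; exact h

/-- linear part applied to a difference -/
lemma sd_sub (a b : ℝ × ℝ) (z w : ℝ × ℝ) :
    sd a b z - sd a b w = (b.1-a.1)*(z.2-w.2) - (b.2-a.2)*(z.1-w.1) := by
  unfold sd; ring

lemma sOppSide_iff {a b : ℝ × ℝ} (hab : a ≠ b) {z w : ℝ × ℝ} :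
    (affineSpan ℝ ({a, b} : Set (ℝ × ℝ))).SOppSide z w ↔ sd a b z * sd a b w < 0 := by
  constructor
  · rintro ⟨⟨p₁, hp₁, p₂, hp₂, hray⟩, hz, hw⟩
    have hsz : sd a b z ≠ 0 := fun h => hz ((mem_line_iff hab).2 h)
    have hsw : sd a b w ≠ 0 := fun h => hw ((mem_line_iff hab).2 h)
    have hp₁0 : sd a b p₁ = 0 := (mem_line_iff hab).1 hp₁
    have hp₂0 : sd a b p₂ = 0 := (mem_line_iff hab).1 hp₂
    rcases hray with h | h | ⟨r₁, r₂, hr₁, hr₂, hr⟩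
    · exfalso; apply hsz
      have : z = p₁ := by
        have := h; rw [vsub_eq_sub, sub_eq_zero] at this; exact this
      rw [this]; exact hp₁0
    · exfalso; apply hsw
      have : p₂ = w := by
        have := h; rw [vsub_eq_sub, sub_eq_zero] at this; exact this
      rw [← this]; exact hp₂0
    · -- apply linear functional to both sides
      rw [vsub_eq_sub, vsub_eq_sub] at hr
      have h1 : r₁ * ((b.1-a.1)*(z.2-p₁.2) - (b.2-a.2)*(z.1-p₁.1))
          = r₂ * ((b.1-a.1)*(p₂.2-w.2) - (b.2-a.2)*(p₂.1-w.1)) := by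
        have e1 := congrArg Prod.fst hr
        have e2 := congrArg Prod.snd hr
        simp only [Prod.smul_fst, Prod.smul_snd, Prod.fst_sub, Prod.snd_sub,
          smul_eq_mul] at e1 e2
        linear_combination (b.1-a.1)*e2 - (b.2-a.2)*e1
      have h2 : r₁ * (sd a b z - sd a b p₁) = r₂ * (sd a b p₂ - sd a b w) := by
        rw [sd_sub, sd_sub]; exact h1
      rw [hp₁0, hp₂0] at h2
      simp only [sub_zero, zero_sub] at h2
      have key : r₂ * (sd a b z * sd a b w) = -(r₁ * (sd a b z * sd a b z)) := by
        linear_combination (sd a b z) * h2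
      nlinarith [key, mul_pos hr₁ (mul_self_pos.2 hsz), hr₂]
  · intro h
    have hsz : sd a b z ≠ 0 := fun h0 => by rw [h0] at h; simp at h
    have hsw : sd a b w ≠ 0 := fun h0 => by rw [h0] at h; simp at h
    have hzw : sd a b z - sd a b w ≠ 0 := by
      intro h0
      have : sd a b z = sd a b w := by linarith
      rw [this] at h; nlinarith
    set θ : ℝ := sd a b z / (sd a b z - sd a b w) with hθ
    have hθ0 : 0 < θ := by
      rcases lt_or_gt_of_ne hsz with h1 | h1
      · apply div_pos_of_neg_of_neg h1; nlinarith
      · apply div_pos h1; nlinarith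
    have hθ1 : θ < 1 := by
      have he : 1 - θ = sd a b w / (sd a b w - sd a b z) := by
        rw [hθ]
        have hzw' : sd a b w - sd a b z ≠ 0 := fun h0 => hzw (by linarith)
        field_simp
        ring
      have : 0 < 1 - θ := by
        rw [he]
        rcases lt_or_gt_of_ne hsw with h1 | h1
        · apply div_pos_of_neg_of_neg h1; nlinarith
        · apply div_pos h1; nlinarith
      linarith
    set m : ℝ × ℝ := (1-θ) • z + θ • w with hm
    have hsm : sd a b m = 0 := by
      have : sd a b m = (1-θ) * sd a b z + θ * sd a b w := by
        simp only [hm, sd, Prod.fst_add, Prod.snd_add, Prod.smul_fst, Prod.smul_snd,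
          smul_eq_mul]; ring
      rw [this, hθ]
      field_simp
      ring
    have hmmem : m ∈ affineSpan ℝ ({a, b} : Set (ℝ × ℝ)) := (mem_line_iff hab).2 hsm
    refine ⟨⟨m, hmmem, m, hmmem, ?_⟩, fun hc => hsz ((mem_line_iff hab).1 hc),
      fun hc => hsw ((mem_line_iff hab).1 hc)⟩
    rw [vsub_eq_sub, vsub_eq_sub]
    right; right
    refine ⟨1-θ, θ, by linarith, hθ0, ?_⟩
    have e1 : z - m = θ • (z - w) := by
      rw [hm]; module
    have e2 : m - w = (1-θ) • (z - w) := by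
      rw [hm]; module
    rw [e1, e2, smul_comm]

/-- extraction of coordinates from the hull of three points -/
lemma hull_param {x y t z : ℝ × ℝ}
    (hz : z ∈ convexHull ℝ ({x, y, t} : Set (ℝ × ℝ))) :
    ∃ c e : ℝ, 0 ≤ c ∧ c ≤ 1 ∧ 0 ≤ e ∧ e ≤ 1 ∧
      z = (1-c) • x + c • ((1-e) • y + e • t) := by
  rw [convexHull_insert (by simp : ({y, t} : Set (ℝ × ℝ)).Nonempty), mem_convexJoin] at hz
  obtain ⟨x', hx', m, hm, hzm⟩ := hz
  rw [Set.mem_singleton_iff] at hx'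
  subst hx'
  rw [convexHull_pair] at hm
  rw [segment_eq_image] at hm hzm
  obtain ⟨e, he, hme⟩ := hm
  obtain ⟨c, hc, hzc⟩ := hzm
  exact ⟨c, e, hc.1, hc.2, he.1, he.2, by rw [← hzc, ← hme]⟩

lemma hull_weak {x y t z : ℝ × ℝ}
    (hz : z ∈ convexHull ℝ ({x, y, t} : Set (ℝ × ℝ))) :
    0 ≤ sd x y z * sd x y t ∧ 0 ≤ sd y t z * sd y t x ∧ 0 ≤ sd t x z * sd t x y := by
  obtain ⟨c, e, hc0, hc1, he0, he1, hzc⟩ := hull_param hz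
  have h1 : (1-c) + c = 1 := by ring
  have h2 : (1-e) + e = 1 := by ring
  have e1 : sd x y z = c * e * sd x y t := by
    rw [hzc, sd_combo _ _ _ _ h1, sd_combo _ _ _ _ h2]
    have : sd x y x = 0 := by unfold sd; ring
    have : sd x y y = 0 := by unfold sd; ring
    simp [show sd x y x = 0 by unfold sd; ring, show sd x y y = 0 by unfold sd; ring]
    ring
  have e2 : sd y t z = (1-c) * sd y t x := by
    rw [hzc, sd_combo _ _ _ _ h1, sd_combo _ _ _ _ h2]
    simp [show sd y t y = 0 by unfold sd; ring, show sd y t t = 0 by unfold sd; ring]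
  have e3 : sd t x z = c * (1-e) * sd t x y := by
    rw [hzc, sd_combo _ _ _ _ h1, sd_combo _ _ _ _ h2]
    simp [show sd t x x = 0 by unfold sd; ring, show sd t x t = 0 by unfold sd; ring]
    ring
  refine ⟨?_, ?_, ?_⟩
  · rw [e1]; nlinarith [sq_nonneg (sd x y t), mul_nonneg hc0 he0, sq_nonneg (sd x y t), mul_nonneg (mul_nonneg hc0 he0) (sq_nonneg (sd x y t))]
  · rw [e2]; nlinarith [sq_nonneg (sd y t x)]
  · rw [e3]; nlinarith [mul_nonneg (mul_nonneg hc0 (by linarith : (0:ℝ) ≤ 1 - e)) (sq_nonneg (sd t x y))]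

lemma sd_perturb (a b w : ℝ × ℝ) (s : ℝ) :
    sd a b (w + s • (-(b.2-a.2), b.1-a.1)) =
      sd a b w + s * ((b.1-a.1)^2 + (b.2-a.2)^2) := by
  simp only [sd, Prod.fst_add, Prod.snd_add, Prod.smul_fst, Prod.smul_snd, smul_eq_mul]
  ring

lemma sd_pos_of_interior {a b : ℝ × ℝ} (hab : a ≠ b) {C : ℝ} (hC : C ≠ 0)
    {Ω : Set (ℝ × ℝ)} (hweak : ∀ z ∈ Ω, 0 ≤ sd a b z * C)
    {w : ℝ × ℝ} (hw : w ∈ interior Ω) : 0 < sd a b w * C := by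
  rcases (hweak w (interior_subset hw)).lt_or_eq with h | h
  · exact h
  · exfalso
    have hsw : sd a b w = 0 := by
      rcases mul_eq_zero.1 h.symm with h0 | h0
      · exact h0
      · exact absurd h0 hC
    obtain ⟨ε, hε, hball⟩ := Metric.isOpen_iff.1 isOpen_interior w hw
    set g : ℝ × ℝ := (-(b.2-a.2), b.1-a.1) with hg
    have hNg : 0 < (b.1-a.1)^2 + (b.2-a.2)^2 := by
      rcases Prod.ext_iff.not.1 hab with h'
      by_contra hcon
      push_neg at hcon
      have e1 : b.1 - a.1 = 0 := by nlinarith [sq_nonneg (b.1-a.1), sq_nonneg (b.2-a.2)]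
      have e2 : b.2 - a.2 = 0 := by nlinarith [sq_nonneg (b.1-a.1), sq_nonneg (b.2-a.2)]
      exact hab (Prod.ext (by linarith) (by linarith))
    set δ : ℝ := ε / ((‖g‖ + 1) * (|C| + 1)) with hδ
    have hCpos : 0 < |C| := abs_pos.2 hC
    have hgn : 0 ≤ ‖g‖ := norm_nonneg g
    have hδpos : 0 < δ := by
      apply div_pos hε
      positivity
    set s : ℝ := -C * δ with hs
    set w' : ℝ × ℝ := w + s • g with hw'
    have hdist : dist w' w < ε := by
      rw [hw', dist_eq_norm, add_sub_cancel_left, norm_smul, Real.norm_eq_abs]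
      have : |s| = |C| * δ := by
        rw [hs, abs_mul, abs_neg, abs_of_pos hδpos]
      rw [this, hδ]
      have hD : (0:ℝ) < (‖g‖ + 1) * (|C| + 1) := by positivity
      have he : |C| * (ε / ((‖g‖ + 1) * (|C| + 1))) * ‖g‖
          = ε * (|C| * ‖g‖) / ((‖g‖ + 1) * (|C| + 1)) := by ring
      rw [he, div_lt_iff₀ hD]
      nlinarith [abs_nonneg C, norm_nonneg g]
    have hw'mem : w' ∈ Ω := interior_subset (hball (by rwa [Metric.mem_ball]))
    have := hweak w' hw'mem
    rw [hw', hg, sd_perturb, hsw, zero_add, hs] at this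
    nlinarith [mul_pos (mul_pos hδpos hNg) (mul_self_pos.2 hC)]

lemma sd_continuous (a b : ℝ × ℝ) : Continuous (fun z : ℝ × ℝ => sd a b z) := by
  unfold sd; fun_prop

lemma mem_interior_tri {x y t : ℝ × ℝ} (h : ¬Collinear ℝ ({x, y, t} : Set (ℝ × ℝ)))
    {w : ℝ × ℝ} :
    w ∈ interior (convexHull ℝ ({x, y, t} : Set (ℝ × ℝ))) ↔
      0 < sd x y w * sd x y t ∧ 0 < sd y t w * sd y t x ∧ 0 < sd t x w * sd t x y := by
  obtain ⟨hxy, hxt, hyt⟩ := ne_of_not_collinear h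
  have hD : sd x y t ≠ 0 := sd_ne_zero_of_not_collinear h
  have hcyc1 : sd y t x = sd x y t := (sd_cyclic x y t).symm
  have hcyc2 : sd t x y = sd x y t := sd_cyclic t x y
  constructor
  · intro hw
    refine ⟨?_, ?_, ?_⟩
    · exact sd_pos_of_interior hxy hD (fun z hz => (hull_weak hz).1) hw
    · exact sd_pos_of_interior hyt (by rwa [hcyc1]) (fun z hz => (hull_weak hz).2.1) hw
    · exact sd_pos_of_interior (Ne.symm hxt) (by rwa [hcyc2]) (fun z hz => (hull_weak hz).2.2) hw
  · intro hw
    -- The strictly-positive-coordinates set is open and contained in the hull.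
    set S : Set (ℝ × ℝ) := {z | 0 < sd x y z * sd x y t ∧ 0 < sd y t z * sd y t x ∧
      0 < sd t x z * sd t x y} with hS
    have hopen : IsOpen S := by
      apply IsOpen.inter
      · exact isOpen_lt continuous_const ((sd_continuous x y).mul continuous_const)
      · apply IsOpen.inter
        · exact isOpen_lt continuous_const ((sd_continuous y t).mul continuous_const)
        · exact isOpen_lt continuous_const ((sd_continuous t x).mul continuous_const)
    have hsub : S ⊆ convexHull ℝ ({x, y, t} : Set (ℝ × ℝ)) := by
      intro z hz
      obtain ⟨h1, h2, h3⟩ := hz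
      rw [hcyc1] at h2
      rw [hcyc2] at h3
      set D := sd x y t with hDdef
      set α : ℝ := sd y t z / D with hα
      set β : ℝ := sd t x z / D with hβ
      set γ : ℝ := sd x y z / D with hγ
      have hD2 : 0 < D * D := mul_self_pos.2 hD
      have hα0 : 0 < α := by rw [hα]; rw [div_pos_iff]; rcases lt_or_gt_of_ne hD with hd | hd
        <;> [right; left] <;> constructor <;> nlinarith
      have hβ0 : 0 < β := by rw [hβ]; rw [div_pos_iff]; rcases lt_or_gt_of_ne hD with hd | hd
        <;> [right; left] <;> constructor <;> nlinarith
      have hγ0 : 0 < γ := by rw [hγ]; rw [div_pos_iff]; rcases lt_or_gt_of_ne hD with hd | hd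
        <;> [right; left] <;> constructor <;> nlinarith
      have hsum : α + β + γ = 1 := by
        rw [hα, hβ, hγ, ← add_div, ← add_div, div_eq_one_iff_eq hD]
        rw [hDdef]; unfold sd; ring
      have hcombo : z = α • x + β • y + γ • t := by
        have hx1 : z.1 * D = sd y t z * x.1 + sd t x z * y.1 + sd x y z * t.1 := by
          rw [hDdef]; unfold sd; ring
        have hx2 : z.2 * D = sd y t z * x.2 + sd t x z * y.2 + sd x y z * t.2 := by
          rw [hDdef]; unfold sd; ring
        apply Prod.ext
        · simp only [Prod.fst_add, Prod.smul_fst, smul_eq_mul, hα, hβ, hγ]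
          field_simp
          linarith [hx1]
        · simp only [Prod.snd_add, Prod.smul_snd, smul_eq_mul, hα, hβ, hγ]
          field_simp
          linarith [hx2]
      -- membership via two segments
      have hβγ : 0 < β + γ := by linarith
      set m : ℝ × ℝ := (β/(β+γ)) • y + (γ/(β+γ)) • t with hm
      have hmseg : m ∈ segment ℝ y t := by
        refine ⟨β/(β+γ), γ/(β+γ), by positivity, by positivity, ?_, rfl⟩
        field_simp
      have hmhull : m ∈ convexHull ℝ ({x, y, t} : Set (ℝ × ℝ)) := by
        have : segment ℝ y t ⊆ convexHull ℝ ({x, y, t} : Set (ℝ × ℝ)) := by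
          rw [← convexHull_pair]
          exact convexHull_mono (by intro z hz; simp at hz; rcases hz with h|h <;> simp [h])
        exact this hmseg
      have hxhull : x ∈ convexHull ℝ ({x, y, t} : Set (ℝ × ℝ)) :=
        subset_convexHull ℝ _ (by simp)
      have hzseg : z ∈ segment ℝ x m := by
        refine ⟨α, β + γ, le_of_lt hα0, le_of_lt hβγ, by linarith, ?_⟩
        rw [hcombo, hm, smul_add, smul_smul, smul_smul]
        have e1 : (β + γ) * (β / (β + γ)) = β := by field_simp
        have e2 : (β + γ) * (γ / (β + γ)) = γ := by field_simp
        rw [e1, e2, add_assoc]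
      exact (convex_convexHull ℝ _).segment_subset hxhull hmhull hzseg
    exact interior_maximal hsub hopen hw

lemma tri_not_collinear (T : Triangle) : ¬Collinear ℝ ({T.a, T.b, T.c} : Set (ℝ × ℝ)) :=
  affineIndependent_iff_not_collinear_set.1 T.indep

lemma tri_aux (T : Triangle) {x y t0 : ℝ × ℝ}
    (hset : ({x, y, t0} : Set (ℝ × ℝ)) = {T.a, T.b, T.c}) :
    T.toSet = convexHull ℝ ({x, y, t0} : Set (ℝ × ℝ)) ∧
      ¬Collinear ℝ ({x, y, t0} : Set (ℝ × ℝ)) :=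
  ⟨by unfold Triangle.toSet; rw [hset], by rw [hset]; exact tri_not_collinear T⟩

lemma third_exists (T : Triangle) {x y : ℝ × ℝ} (hxy : x ≠ y)
    (hx : T.IsVertex x) (hy : T.IsVertex y) :
    ∃ t : ℝ × ℝ, ({x, y, t} : Set (ℝ × ℝ)) = {T.a, T.b, T.c} := by
  rcases hx with rfl | rfl | rfl <;> rcases hy with rfl | rfl | rfl
  · exact absurd rfl hxy
  · exact ⟨T.c, by ext w; constructor <;> (intro hw; simp only [Set.mem_insert_iff, Set.mem_singleton_iff] at hw ⊢; tauto)⟩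
  · exact ⟨T.b, by ext w; constructor <;> (intro hw; simp only [Set.mem_insert_iff, Set.mem_singleton_iff] at hw ⊢; tauto)⟩
  · exact ⟨T.c, by ext w; constructor <;> (intro hw; simp only [Set.mem_insert_iff, Set.mem_singleton_iff] at hw ⊢; tauto)⟩
  · exact absurd rfl hxy
  · exact ⟨T.a, by ext w; constructor <;> (intro hw; simp only [Set.mem_insert_iff, Set.mem_singleton_iff] at hw ⊢; tauto)⟩
  · exact ⟨T.b, by ext w; constructor <;> (intro hw; simp only [Set.mem_insert_iff, Set.mem_singleton_iff] at hw ⊢; tauto)⟩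
  · exact ⟨T.a, by ext w; constructor <;> (intro hw; simp only [Set.mem_insert_iff, Set.mem_singleton_iff] at hw ⊢; tauto)⟩
  · exact absurd rfl hxy

lemma third_vertex_s7 (T : Triangle) {x y : ℝ × ℝ} (h : T.IsSide x y) :
    ∃ t : ℝ × ℝ, T.toSet = convexHull ℝ ({x, y, t} : Set (ℝ × ℝ)) ∧
      ¬Collinear ℝ ({x, y, t} : Set (ℝ × ℝ)) := by
  obtain ⟨hxy, hx, hy⟩ := h
  obtain ⟨t, ht⟩ := third_exists T hxy hx hy
  exact ⟨t, tri_aux T ht⟩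

lemma vertex_hull (T : Triangle) {x y z : ℝ × ℝ} (hx : T.IsVertex x) (hy : T.IsVertex y)
    (hz : T.IsVertex z) (hxy : x ≠ y) (hxz : x ≠ z) (hyz : y ≠ z) :
    T.toSet = convexHull ℝ ({x, y, z} : Set (ℝ × ℝ)) ∧
      ¬Collinear ℝ ({x, y, z} : Set (ℝ × ℝ)) := by
  obtain ⟨t, ht⟩ := third_exists T hxy hx hy
  have hzv : z ∈ ({x, y, t} : Set (ℝ × ℝ)) := by
    rw [ht]
    rcases hz with rfl | rfl | rfl <;> simp
  simp only [Set.mem_insert_iff, Set.mem_singleton_iff] at hzv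
  rcases hzv with rfl | rfl | rfl
  · exact absurd rfl hxz
  · exact absurd rfl hyz
  · exact tri_aux T ht

lemma small_eps {a b a' b' : ℝ} (ha : 0 < a) (ha' : 0 < a') :
    ∃ ε : ℝ, 0 < ε ∧ ε < 1 ∧ 0 < (1-ε)*a + ε*b ∧ 0 < (1-ε)*a' + ε*b' := by
  set ε : ℝ := min (1/2) (min (a/(2*(|b|+a))) (a'/(2*(|b'|+a')))) with hε
  have hd1 : (0:ℝ) < 2*(|b|+a) := by positivity
  have hd2 : (0:ℝ) < 2*(|b'|+a') := by positivity
  have hε0 : 0 < ε := by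
    apply lt_min (by norm_num)
    exact lt_min (by positivity) (by positivity)
  have h1 : ε ≤ 1/2 := min_le_left _ _
  have h2 : ε ≤ a/(2*(|b|+a)) := le_trans (min_le_right _ _) (min_le_left _ _)
  have h3 : ε ≤ a'/(2*(|b'|+a')) := le_trans (min_le_right _ _) (min_le_right _ _)
  have k2 : ε * (2*(|b|+a)) ≤ a := by
    rw [← le_div_iff₀ hd1]; exact h2
  have k3 : ε * (2*(|b'|+a')) ≤ a' := by
    rw [← le_div_iff₀ hd2]; exact h3
  have hb : -(ε*|b|) ≤ ε*b := by nlinarith [neg_abs_le b, hε0.le]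
  have hb' : -(ε*|b'|) ≤ ε*b' := by nlinarith [neg_abs_le b', hε0.le]
  exact ⟨ε, hε0, by linarith, by nlinarith [k2, hb], by nlinarith [k3, hb']⟩

set_option maxHeartbeats 1000000 in
lemma key_lemma (p q₁ q₂ x₀ y₀ x₁ y₁ : ℝ × ℝ) (T₁ : Triangle)
    (hT : ¬Collinear ℝ ({p, q₁, q₂} : Set (ℝ × ℝ)))
    (hs₁ : T₁.IsSide x₁ y₁)
    (hd : Disjoint (interior (convexHull ℝ ({p, q₁, q₂} : Set (ℝ × ℝ))))
      (interior T₁.toSet))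
    {u v u' v' : ℝ × ℝ} (huv : u ≠ v) (huv' : u' ≠ v')
    (hu1 : u ∈ segment ℝ p q₁) (hv1 : v ∈ segment ℝ p q₁)
    (hu0 : u ∈ segment ℝ x₀ y₀) (hv0 : v ∈ segment ℝ x₀ y₀)
    (hu1' : u' ∈ segment ℝ p q₂) (hv1' : v' ∈ segment ℝ p q₂)
    (hu0' : u' ∈ segment ℝ x₁ y₁) (hv0' : v' ∈ segment ℝ x₁ y₁) :
    ∃ c d : ℝ × ℝ, c ≠ d ∧ segment ℝ c d ⊆ segment ℝ x₀ y₀ ∧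
      ∀ z ∈ segment ℝ c d, ∀ w ∈ interior T₁.toSet,
        (affineSpan ℝ ({x₁, y₁} : Set (ℝ × ℝ))).SOppSide z w := by
  obtain ⟨hpq1, hpq2, hq12⟩ := ne_of_not_collinear hT
  have hDt : sd p q₁ q₂ ≠ 0 := sd_ne_zero_of_not_collinear hT
  obtain ⟨t₁, hT₁set, hT₁ncol⟩ := third_vertex_s7 T₁ hs₁
  have hx₁y₁ : x₁ ≠ y₁ := hs₁.1
  have hD₁ : sd x₁ y₁ t₁ ≠ 0 := sd_ne_zero_of_not_collinear hT₁ncol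
  obtain ⟨s, hs0, hs1, hus⟩ := seg_param hu1
  obtain ⟨t, ht0, ht1, hvt⟩ := seg_param hv1
  obtain ⟨s', hs0', hs1', hus'⟩ := seg_param hu1'
  obtain ⟨t', ht0', ht1', hvt'⟩ := seg_param hv1'
  obtain ⟨σ, hσ0, hσ1, huσ⟩ := seg_param hu0'
  obtain ⟨τ, hτ0, hτ1, hvτ⟩ := seg_param hv0'
  have hst : s ≠ t := fun h => huv (by rw [hus, hvt, h])
  have hst' : s' ≠ t' := fun h => huv' (by rw [hus', hvt', h])
  have hστ : σ ≠ τ := fun h => huv' (by rw [huσ, hvτ, h])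
  -- the two parametrizations of the contact line of T₁
  have hκ : ∀ z, (τ - σ) * sd x₁ y₁ z = (t' - s') * sd p q₂ z := fun z => by
    rw [← sd_of_seg huσ hvτ z, sd_of_seg hus' hvt' z]
  have hτσ : τ - σ ≠ 0 := fun h => hστ (by linarith)
  have hts' : t' - s' ≠ 0 := fun h => hst' (by linarith)
  have h_p0 : sd x₁ y₁ p = 0 := by
    have := hκ p
    have hpp : sd p q₂ p = 0 := by unfold sd; ring
    rw [hpp, mul_zero] at this
    exact (mul_eq_zero.1 this).resolve_left hτσ
  have hq1cyc : sd p q₂ q₁ = -sd p q₁ q₂ := by unfold sd; ring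
  have h_q1ne : sd x₁ y₁ q₁ ≠ 0 := by
    intro h0
    have := hκ q₁
    rw [h0, mul_zero] at this
    rcases mul_eq_zero.1 this.symm with h | h
    · exact hts' h
    · rw [hq1cyc] at h; exact hDt (by linarith)
  -- T and T₁ are strictly on opposite sides of the line through x₁ y₁
  have hopp : sd x₁ y₁ q₁ * sd x₁ y₁ t₁ < 0 := by
    by_contra hcon
    push_neg at hcon
    have hpos : 0 < sd x₁ y₁ q₁ * sd x₁ y₁ t₁ :=
      lt_of_le_of_ne hcon (fun h => (mul_ne_zero h_q1ne hD₁) h.symm)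
    -- midpoint of the contact segment of T and T₁
    obtain ⟨m, hm⟩ : ∃ m : ℝ × ℝ, m = (1/2 : ℝ) • u' + (1/2 : ℝ) • v' := ⟨_, rfl⟩
    have hmr : m = (1-(s'+t')/2) • p + ((s'+t')/2) • q₂ := by
      rw [hm, hus', hvt']; module
    have hmμ : m = (1-(σ+τ)/2) • x₁ + ((σ+τ)/2) • y₁ := by
      rw [hm, huσ, hvτ]; module
    have hr0 : 0 < (s'+t')/2 := by
      rcases lt_trichotomy s' t' with h | h | h
      · nlinarith
      · exact absurd h hst'
      · nlinarith
    have hr1 : (s'+t')/2 < 1 := by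
      rcases lt_trichotomy s' t' with h | h | h
      · nlinarith
      · exact absurd h hst'
      · nlinarith
    have hμ0 : 0 < (σ+τ)/2 := by
      rcases lt_trichotomy σ τ with h | h | h
      · nlinarith
      · exact absurd h hστ
      · nlinarith
    have hμ1 : (σ+τ)/2 < 1 := by
      rcases lt_trichotomy σ τ with h | h | h
      · nlinarith
      · exact absurd h hστ
      · nlinarith
    have hone : ∀ θ : ℝ, (1-θ) + θ = 1 := fun θ => by ring
    -- sd values at m
    have hm_x₁y₁ : sd x₁ y₁ m = 0 := by
      rw [hmμ, sd_combo _ _ _ _ (hone _)]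
      have e1 : sd x₁ y₁ x₁ = 0 := by unfold sd; ring
      have e2 : sd x₁ y₁ y₁ = 0 := by unfold sd; ring
      rw [e1, e2]; ring
    have hm_y₁t₁ : sd y₁ t₁ m = (1-(σ+τ)/2) * sd y₁ t₁ x₁ := by
      rw [hmμ, sd_combo _ _ _ _ (hone _)]
      have e2 : sd y₁ t₁ y₁ = 0 := by unfold sd; ring
      rw [e2]; ring
    have hm_t₁x₁ : sd t₁ x₁ m = ((σ+τ)/2) * sd t₁ x₁ y₁ := by
      rw [hmμ, sd_combo _ _ _ _ (hone _)]
      have e1 : sd t₁ x₁ x₁ = 0 := by unfold sd; ring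
      rw [e1]; ring
    have hcycA : sd y₁ t₁ x₁ = sd x₁ y₁ t₁ := by unfold sd; ring
    have hcycB : sd t₁ x₁ y₁ = sd x₁ y₁ t₁ := by unfold sd; ring
    -- choose ε
    have ha : 0 < sd y₁ t₁ m * sd y₁ t₁ x₁ := by
      rw [hm_y₁t₁, hcycA]; nlinarith [mul_self_pos.2 hD₁]
    have ha' : 0 < sd t₁ x₁ m * sd t₁ x₁ y₁ := by
      rw [hm_t₁x₁, hcycB]; nlinarith [mul_self_pos.2 hD₁]
    obtain ⟨ε, hε0, hε1, hA, hA'⟩ :=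
      small_eps (b := sd y₁ t₁ q₁ * sd y₁ t₁ x₁) (b' := sd t₁ x₁ q₁ * sd t₁ x₁ y₁) ha ha'
    obtain ⟨w', hw'⟩ : ∃ w' : ℝ × ℝ, w' = (1-ε) • m + ε • q₁ := ⟨_, rfl⟩
    -- w' is interior to T₁
    have hw'T₁ : w' ∈ interior T₁.toSet := by
      rw [hT₁set, mem_interior_tri hT₁ncol]
      refine ⟨?_, ?_, ?_⟩
      · rw [hw', sd_combo _ _ _ _ (hone _), hm_x₁y₁]
        nlinarith [mul_pos hε0 hpos]
      · rw [hw', sd_combo _ _ _ _ (hone _)]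
        nlinarith [hA]
      · rw [hw', sd_combo _ _ _ _ (hone _)]
        nlinarith [hA']
    -- w' is interior to T
    have hw'T : w' ∈ interior (convexHull ℝ ({p, q₁, q₂} : Set (ℝ × ℝ))) := by
      rw [mem_interior_tri hT]
      have hm_pq1 : sd p q₁ m = ((s'+t')/2) * sd p q₁ q₂ := by
        rw [hmr, sd_combo _ _ _ _ (hone _)]
        have e1 : sd p q₁ p = 0 := by unfold sd; ring
        rw [e1]; ring
      have hm_q1q2 : sd q₁ q₂ m = (1-(s'+t')/2) * sd q₁ q₂ p := by
        rw [hmr, sd_combo _ _ _ _ (hone _)]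
        have e2 : sd q₁ q₂ q₂ = 0 := by unfold sd; ring
        rw [e2]; ring
      have hm_q2p : sd q₂ p m = 0 := by
        rw [hmr, sd_combo _ _ _ _ (hone _)]
        have e1 : sd q₂ p p = 0 := by unfold sd; ring
        have e2 : sd q₂ p q₂ = 0 := by unfold sd; ring
        rw [e1, e2]; ring
      have hcycC : sd q₁ q₂ p = sd p q₁ q₂ := by unfold sd; ring
      have hcycD : sd q₂ p q₁ = sd p q₁ q₂ := by unfold sd; ring
      have e3 : sd p q₁ q₁ = 0 := by unfold sd; ring
      have e4 : sd q₁ q₂ q₁ = 0 := by unfold sd; ring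
      refine ⟨?_, ?_, ?_⟩
      · rw [hw', sd_combo _ _ _ _ (hone _), hm_pq1, e3]
        nlinarith [mul_pos (mul_pos (by linarith : (0:ℝ) < 1-ε) hr0) (mul_self_pos.2 hDt)]
      · rw [hw', sd_combo _ _ _ _ (hone _), hm_q1q2, e4, hcycC]
        nlinarith [mul_pos (mul_pos (by linarith : (0:ℝ) < 1-ε)
          (by linarith : (0:ℝ) < 1-(s'+t')/2)) (mul_self_pos.2 hDt)]
      · rw [hw', sd_combo _ _ _ _ (hone _), hm_q2p, hcycD]
        nlinarith [mul_pos hε0 (mul_self_pos.2 hDt)]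
    exact Set.disjoint_left.1 hd hw'T hw'T₁
  -- now build the subsegment of [x₀, y₀]
  obtain ⟨c, hc⟩ : ∃ c : ℝ × ℝ, c = (1/2 : ℝ) • u + (1/2 : ℝ) • v := ⟨_, rfl⟩
  obtain ⟨d, hd'⟩ : ∃ d : ℝ × ℝ, d = (1/4 : ℝ) • u + (3/4 : ℝ) • v := ⟨_, rfl⟩
  have hcr : c = (1-(s+t)/2) • p + ((s+t)/2) • q₁ := by rw [hc, hus, hvt]; module
  have hdr : d = (1-(s+3*t)/4) • p + ((s+3*t)/4) • q₁ := by rw [hd', hus, hvt]; module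
  have hrc0 : 0 < (s+t)/2 := by
    rcases lt_trichotomy s t with h | h | h
    · nlinarith
    · exact absurd h hst
    · nlinarith
  have hrd0 : 0 < (s+3*t)/4 := by
    rcases lt_trichotomy s t with h | h | h
    · nlinarith
    · exact absurd h hst
    · nlinarith
  have hcd : c ≠ d := by
    intro h
    have hzero : ((s+t)/2 - (s+3*t)/4) • (q₁ - p) = c - d := by
      rw [hcr, hdr]; module
    rw [h, sub_self] at hzero
    rcases smul_eq_zero.1 hzero with h0 | h0
    · exact hst (by linarith)
    · exact hpq1 (sub_eq_zero.1 h0).symm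
  have hcm : c ∈ segment ℝ u v :=
    ⟨1/2, 1/2, by norm_num, by norm_num, by norm_num, hc.symm⟩
  have hdm : d ∈ segment ℝ u v :=
    ⟨1/4, 3/4, by norm_num, by norm_num, by norm_num, hd'.symm⟩
  have hsub1 : segment ℝ u v ⊆ segment ℝ x₀ y₀ :=
    (convex_segment x₀ y₀).segment_subset hu0 hv0
  have hsub2 : segment ℝ c d ⊆ segment ℝ u v :=
    (convex_segment u v).segment_subset hcm hdm
  refine ⟨c, d, hcd, hsub2.trans hsub1, ?_⟩
  intro z hz w hw
  obtain ⟨θ, hθ0, hθ1, hzθ⟩ := seg_param hz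
  have hone : ∀ θ : ℝ, (1-θ) + θ = 1 := fun θ => by ring
  obtain ⟨rz, hrz⟩ : ∃ rz : ℝ, rz = (1-θ) * ((s+t)/2) + θ * ((s+3*t)/4) := ⟨_, rfl⟩
  have hz2 : z = (1-rz) • p + rz • q₁ := by
    rw [hzθ, hcr, hdr, hrz]; module
  have hrzpos : 0 < rz := by
    rw [hrz]; nlinarith [mul_nonneg (by linarith : (0:ℝ) ≤ 1-θ) hrc0.le,
      mul_nonneg hθ0 hrd0.le]
  have hsdz : sd x₁ y₁ z = rz * sd x₁ y₁ q₁ := by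
    rw [hz2, sd_combo _ _ _ _ (hone _), h_p0]; ring
  rw [hT₁set, mem_interior_tri hT₁ncol] at hw
  obtain ⟨hw1, _, _⟩ := hw
  rw [sOppSide_iff hx₁y₁, hsdz]
  have hQW : sd x₁ y₁ q₁ * sd x₁ y₁ w < 0 := by
    nlinarith [mul_neg_of_neg_of_pos hopp hw1, mul_self_pos.2 hD₁]
  nlinarith [mul_neg_of_pos_of_neg hrzpos hQW]

/-- If a triangle T touches triangles T₀ and T₁ using two distinct sides of T
meeting at the vertex p, then the lines through the touched sides s₀ of T₀ and
s₁ of T₁ are distinct, meet exactly at p, and the intersection is feasible. -/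
theorem feasible_angle_of_touching (T₀ T₁ T : Triangle)
    (hd01 : Disjoint (interior T₀.toSet) (interior T₁.toSet))
    (hd0 : Disjoint (interior T.toSet) (interior T₀.toSet))
    (hd1 : Disjoint (interior T.toSet) (interior T₁.toSet))
    (ht0 : Touches T.toSet T₀.toSet) (ht1 : Touches T.toSet T₁.toSet)
    (p q₁ q₂ : ℝ × ℝ)
    (ha : T.IsSide p q₁) (hb : T.IsSide p q₂) (hqq : q₁ ≠ q₂)
    (hca : T.toSet ∩ T₀.toSet ⊆ segment ℝ p q₁)
    (hcb : T.toSet ∩ T₁.toSet ⊆ segment ℝ p q₂)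
    (x₀ y₀ x₁ y₁ : ℝ × ℝ)
    (hs₀ : T₀.IsSide x₀ y₀) (hs₁ : T₁.IsSide x₁ y₁)
    (hc₀ : T.toSet ∩ T₀.toSet ⊆ segment ℝ x₀ y₀)
    (hc₁ : T.toSet ∩ T₁.toSet ⊆ segment ℝ x₁ y₁) :
    affineSpan ℝ ({x₀, y₀} : Set (ℝ × ℝ)) ≠ affineSpan ℝ ({x₁, y₁} : Set (ℝ × ℝ)) ∧
    (affineSpan ℝ ({x₀, y₀} : Set (ℝ × ℝ)) : Set (ℝ × ℝ)) ∩
      (affineSpan ℝ ({x₁, y₁} : Set (ℝ × ℝ)) : Set (ℝ × ℝ)) = {p} ∧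
    (∃ c d : ℝ × ℝ, c ≠ d ∧ segment ℝ c d ⊆ segment ℝ x₀ y₀ ∧
      ∀ z ∈ segment ℝ c d, ∀ w ∈ interior T₁.toSet,
        (affineSpan ℝ ({x₁, y₁} : Set (ℝ × ℝ))).SOppSide z w) ∧
    (∃ c d : ℝ × ℝ, c ≠ d ∧ segment ℝ c d ⊆ segment ℝ x₁ y₁ ∧
      ∀ z ∈ segment ℝ c d, ∀ w ∈ interior T₀.toSet,
        (affineSpan ℝ ({x₀, y₀} : Set (ℝ × ℝ))).SOppSide z w) := by
  obtain ⟨hpq1, hvp, hvq1⟩ := ha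
  obtain ⟨hpq2, _, hvq2⟩ := hb
  have hx₀y₀ : x₀ ≠ y₀ := hs₀.1
  have hx₁y₁ : x₁ ≠ y₁ := hs₁.1
  obtain ⟨hTset, hncolT⟩ := vertex_hull T hvp hvq1 hvq2 hpq1 hpq2 hqq
  obtain ⟨hTset', hncolT'⟩ := vertex_hull T hvp hvq2 hvq1 hpq2 hpq1 (Ne.symm hqq)
  have hDt : sd p q₁ q₂ ≠ 0 := sd_ne_zero_of_not_collinear hncolT
  obtain ⟨u, v, huv, hu, hv⟩ := ht0
  obtain ⟨u', v', huv', hu', hv'⟩ := ht1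
  have hu1 : u ∈ segment ℝ p q₁ := hca hu
  have hv1 : v ∈ segment ℝ p q₁ := hca hv
  have hu0 : u ∈ segment ℝ x₀ y₀ := hc₀ hu
  have hv0 : v ∈ segment ℝ x₀ y₀ := hc₀ hv
  have hu1' : u' ∈ segment ℝ p q₂ := hcb hu'
  have hv1' : v' ∈ segment ℝ p q₂ := hcb hv'
  have hu0' : u' ∈ segment ℝ x₁ y₁ := hc₁ hu'
  have hv0' : v' ∈ segment ℝ x₁ y₁ := hc₁ hv'
  have hL0 : affineSpan ℝ ({x₀, y₀} : Set (ℝ × ℝ)) = affineSpan ℝ ({p, q₁} : Set (ℝ × ℝ)) :=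
    (span_pair_eq_of_seg hx₀y₀ huv hu0 hv0).symm.trans (span_pair_eq_of_seg hpq1 huv hu1 hv1)
  have hL1 : affineSpan ℝ ({x₁, y₁} : Set (ℝ × ℝ)) = affineSpan ℝ ({p, q₂} : Set (ℝ × ℝ)) :=
    (span_pair_eq_of_seg hx₁y₁ huv' hu0' hv0').symm.trans
      (span_pair_eq_of_seg hpq2 huv' hu1' hv1')
  refine ⟨?_, ?_, ?_, ?_⟩
  · rw [hL0, hL1]
    intro h
    have hq2 : q₂ ∈ affineSpan ℝ ({p, q₁} : Set (ℝ × ℝ)) := by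
      rw [h]; exact right_mem_affineSpan_pair ℝ p q₂
    exact hDt ((mem_line_iff hpq1).1 hq2)
  · rw [hL0, hL1]
    ext z
    simp only [Set.mem_inter_iff, SetLike.mem_coe, Set.mem_singleton_iff]
    constructor
    · rintro ⟨hz0, hz1⟩
      have e0 : sd p q₁ z = 0 := (mem_line_iff hpq1).1 hz0
      have e1 : sd p q₂ z = 0 := (mem_line_iff hpq2).1 hz1
      have k1 : (z.1 - p.1) * sd p q₁ q₂ = 0 := by
        simp only [sd] at e0 e1 ⊢
        linear_combination (q₂.1-p.1)*e0 - (q₁.1-p.1)*e1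
      have k2 : (z.2 - p.2) * sd p q₁ q₂ = 0 := by
        simp only [sd] at e0 e1 ⊢
        linear_combination (q₂.2-p.2)*e0 - (q₁.2-p.2)*e1
      have z1 : z.1 = p.1 := by
        rcases mul_eq_zero.1 k1 with h | h
        · linarith
        · exact absurd h hDt
      have z2 : z.2 = p.2 := by
        rcases mul_eq_zero.1 k2 with h | h
        · linarith
        · exact absurd h hDt
      exact Prod.ext z1 z2
    · rintro rfl
      exact ⟨left_mem_affineSpan_pair ℝ _ _, left_mem_affineSpan_pair ℝ _ _⟩
  · exact key_lemma p q₁ q₂ x₀ y₀ x₁ y₁ T₁ hncolT hs₁ (hTset ▸ hd1)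
      huv huv' hu1 hv1 hu0 hv0 hu1' hv1' hu0' hv0'
  · exact key_lemma p q₂ q₁ x₁ y₁ x₀ y₀ T₀ hncolT' hs₀ (hTset' ▸ hd0)
      huv' huv hu1' hv1' hu0' hv0' hu1 hv1 hu0 hv0

end
end

section
/- Let T₀ and T₁ be triangles in ℝ² with disjoint interiors such that no side of T₀ lies on the same line as a side of T₁. Then any family of triangles with pairwise disjoint interiors, each of whose members has interior disjoint from T₀ and from T₁ and touches both T₀ and T₁, has at most nine members. -/
set_option maxHeartbeats 1000000


open Set Function

namespace Nine


/-- two distinct points of a pair-line span the same line -/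
lemma line_eq {P Q p q : ℝ × ℝ} (hpq : p ≠ q)
    (hp : p ∈ line[ℝ, P, Q]) (hq : q ∈ line[ℝ, P, Q]) :
    line[ℝ, p, q] = line[ℝ, P, Q] := by
  have hPQ : P ≠ Q := by
    rintro rfl
    have : line[ℝ, P, P] = affineSpan ℝ {P} := by simp
    rw [this] at hp hq
    simp [AffineSubspace.mem_affineSpan_singleton] at hp hq
    exact hpq (hp.trans hq.symm)
  have hle : line[ℝ, p, q] ≤ line[ℝ, P, Q] :=
    affineSpan_pair_le_of_mem_of_mem hp hq
  refine AffineSubspace.ext_of_direction_eq ?_ ⟨p, left_mem_affineSpan_pair _ _ _, hp⟩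
  have h1 : (line[ℝ, p, q] : AffineSubspace ℝ (ℝ × ℝ)).direction ≤
      (line[ℝ, P, Q]).direction := AffineSubspace.direction_le hle
  have d1 : (line[ℝ, p, q] : AffineSubspace ℝ (ℝ × ℝ)).direction = ℝ ∙ (p -ᵥ q) := by
    rw [direction_affineSpan, vectorSpan_pair]
  have d2 : (line[ℝ, P, Q] : AffineSubspace ℝ (ℝ × ℝ)).direction = ℝ ∙ (P -ᵥ Q) := by
    rw [direction_affineSpan, vectorSpan_pair]
  apply Submodule.eq_of_le_of_finrank_le h1
  rw [d1, d2, finrank_span_singleton (by simpa using sub_ne_zero_of_ne hPQ),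
    finrank_span_singleton (by simpa using sub_ne_zero_of_ne hpq)]



/-- an affine functional vanishing at two points vanishes on their line -/
lemma vanish {f : (ℝ × ℝ) →ᵃ[ℝ] ℝ} {P Q z : ℝ × ℝ} (hP : f P = 0) (hQ : f Q = 0)
    (hz : z ∈ line[ℝ, P, Q]) : f z = 0 := by
  have hz' : (z - P) +ᵥ P ∈ line[ℝ, P, Q] := by simpa using hz
  obtain ⟨r, hr⟩ := vadd_left_mem_affineSpan_pair.mp hz'
  have : f.linear (z - P) = f z - f P := by
    simpa [vsub_eq_sub] using f.linearMap_vsub z P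
  have h2 : f.linear (Q - P) = f Q - f P := by
    simpa [vsub_eq_sub] using f.linearMap_vsub Q P
  have : f z - f P = r • (f Q - f P) := by
    rw [← this, ← h2, ← map_smul]
    congr 1
    simpa [vsub_eq_sub] using hr.symm
  simp [hP, hQ] at this
  linarith [this]

/-- the zero set of a nonzero affine functional vanishing at `P ≠ Q` is `line[P,Q]` -/
lemma zero_set_subset {f : (ℝ × ℝ) →ᵃ[ℝ] ℝ} {P Q R p : ℝ × ℝ} (hPQ : P ≠ Q)
    (hP : f P = 0) (hQ : f Q = 0) (hR : f R ≠ 0) (hp : f p = 0) :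
    p ∈ line[ℝ, P, Q] := by
  have hlin : ∀ x y : ℝ × ℝ, f.linear (x - y) = f x - f y := fun x y => by
    simpa [vsub_eq_sub] using f.linearMap_vsub x y
  have hker1 : (Q - P) ∈ LinearMap.ker f.linear := by
    simp [LinearMap.mem_ker, hlin Q P, hP, hQ]
  have hker2 : (p - P) ∈ LinearMap.ker f.linear := by
    simp [LinearMap.mem_ker, hlin p P, hP, hp]
  have hne : f.linear (R - P) ≠ 0 := by simp [hlin R P, hP, hR]
  have hrangerank : 1 ≤ Module.finrank ℝ (LinearMap.range f.linear) := by
    have h0 : f.linear (R - P) ∈ LinearMap.range f.linear := LinearMap.mem_range_self _ _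
    have : LinearMap.range f.linear ≠ ⊥ := by
      intro hb
      rw [hb] at h0
      simp only [Submodule.mem_bot] at h0
      exact hne h0
    exact Submodule.one_le_finrank_iff.mpr this
  have hkerrank : Module.finrank ℝ (LinearMap.ker f.linear) ≤ 1 := by
    have := f.linear.finrank_range_add_finrank_ker
    have h2 : Module.finrank ℝ (ℝ × ℝ) = 2 := by simp
    omega
  have hspan : (ℝ ∙ (Q - P)) = LinearMap.ker f.linear := by
    apply Submodule.eq_of_le_of_finrank_le
    · rwa [Submodule.span_singleton_le_iff_mem]
    · rw [finrank_span_singleton (sub_ne_zero_of_ne (Ne.symm hPQ))]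
      exact hkerrank
  rw [← hspan] at hker2
  obtain ⟨r, hr⟩ := Submodule.mem_span_singleton.mp hker2
  have : (p - P) +ᵥ P ∈ line[ℝ, P, Q] := by
    apply vadd_left_mem_affineSpan_pair.mpr
    exact ⟨r, by simpa [vsub_eq_sub] using hr⟩
  simpa using this



lemma range_triple (A B C : ℝ × ℝ) : Set.range ![A, B, C] = {A, B, C} := by
  ext p
  simp [Matrix.range_cons, Matrix.range_empty]
  tauto

/-- an affine basis from three affinely independent points of the plane -/
noncomputable def basisOf {A B C : ℝ × ℝ} (h : AffineIndependent ℝ ![A, B, C]) :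
    AffineBasis (Fin 3) ℝ (ℝ × ℝ) :=
  ⟨![A, B, C], h, by
    rw [h.affineSpan_eq_top_iff_card_eq_finrank_add_one]
    simp⟩

@[simp] lemma basisOf_points {A B C : ℝ × ℝ} (h : AffineIndependent ℝ ![A, B, C]) :
    ⇑(basisOf h) = ![A, B, C] := rfl

lemma coord_nonneg_of_mem_hull (b : AffineBasis (Fin 3) ℝ (ℝ × ℝ)) {p : ℝ × ℝ}
    (hp : p ∈ convexHull ℝ (Set.range ⇑b)) (i : Fin 3) : 0 ≤ b.coord i p := by
  have hconv : Convex ℝ {x : ℝ × ℝ | 0 ≤ b.coord i x} := by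
    have := (convex_Ici (0:ℝ)).affine_preimage (b.coord i)
    exact this
  have : convexHull ℝ (Set.range ⇑b) ⊆ {x : ℝ × ℝ | 0 ≤ b.coord i x} := by
    apply convexHull_min _ hconv
    rintro x ⟨j, rfl⟩
    simp [b.coord_apply]
    split <;> norm_num
  exact this hp

lemma sum3 {M : Type*} [AddCommMonoid M] (f : Fin 3 → M) (i : Fin 3) :
    ∑ j, f j = f i + f (i + 1) + f (i + 2) := by
  fin_cases i <;> simp [Fin.sum_univ_three] <;> abel





lemma apply_affine_pair (f : (ℝ × ℝ) →ᵃ[ℝ] ℝ) {a c : ℝ} (hac : a + c = 1) (x y : ℝ × ℝ) :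
    f (a • x + c • y) = a * f x + c * f y := by
  have ha : a = 1 - c := by linarith
  have : a • x + c • y = AffineMap.lineMap x y c := by
    simp [AffineMap.lineMap_apply, ha, vsub_eq_sub, vadd_eq_add, smul_sub, sub_smul, one_smul]
    module
  rw [this, AffineMap.apply_lineMap]
  simp [AffineMap.lineMap_apply, ha, vsub_eq_sub, vadd_eq_add]
  ring

lemma apply_affine_comb (f : (ℝ × ℝ) →ᵃ[ℝ] ℝ) (O B D : ℝ × ℝ) (s t : ℝ) :
    f (O + s • (B - O) + t • (D - O)) = f O + s * (f B - f O) + t * (f D - f O) := by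
  have hlin : ∀ x y : ℝ × ℝ, f.linear (x - y) = f x - f y := fun x y => by
    simpa [vsub_eq_sub] using f.linearMap_vsub x y
  have : O + s • (B - O) + t • (D - O) = (s • (B - O) + t • (D - O)) +ᵥ O := by
    simp [vadd_eq_add]; module
  rw [this, AffineMap.map_vadd]
  simp [vadd_eq_add, map_add, map_smul, hlin]
  ring

lemma mem_interior_comb (b : AffineBasis (Fin 3) ℝ (ℝ × ℝ)) {o p q : Fin 3}
    (hop : o ≠ p) (hoq : o ≠ q) (hpq : p ≠ q) {s t : ℝ}
    (hs : 0 < s) (ht : 0 < t) (hst : s + t < 1) :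
    b o + s • (b p - b o) + t • (b q - b o) ∈ interior (convexHull ℝ (Set.range ⇑b)) := by
  rw [b.interior_convexHull]
  intro i
  rw [apply_affine_comb]
  have hcase : i = o ∨ i = p ∨ i = q := by
    revert hop hoq hpq; revert o p q i; decide
  rcases hcase with rfl | rfl | rfl <;>
    simp [b.coord_apply, hop.symm, hoq.symm, hpq.symm, hop, hoq, hpq] <;> linarith

lemma mem_side_of_coord_zero (b : AffineBasis (Fin 3) ℝ (ℝ × ℝ)) {x : ℝ × ℝ}
    (hx : x ∈ convexHull ℝ (Set.range ⇑b)) (i : Fin 3) (h0 : b.coord i x = 0) :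
    x ∈ segment ℝ (b (i + 1)) (b (i + 2)) := by
  have hrep := b.linear_combination_coord_eq_self x
  rw [sum3 (fun j => b.coord j x • b j) i] at hrep
  have hsum := b.sum_coord_apply_eq_one x
  rw [sum3 (fun j => b.coord j x) i] at hsum
  refine ⟨b.coord (i+1) x, b.coord (i+2) x, ?_, ?_, by rw [h0] at hsum; linarith, ?_⟩
  · exact coord_nonneg_of_mem_hull b hx _
  · exact coord_nonneg_of_mem_hull b hx _
  · rw [h0] at hrep; simpa using hrep



lemma fin3_ne (i : Fin 3) : i ≠ i + 1 ∧ i ≠ i + 2 ∧ i + 1 ≠ i + 2 := by revert i; decide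

lemma fin3_cases (i j : Fin 3) : j = i ∨ j = i + 1 ∨ j = i + 2 := by revert i j; decide

lemma toSet_eq (T : Triangle) : T.toSet = convexHull ℝ (Set.range ⇑(basisOf T.indep)) := by
  rw [basisOf_points, range_triple]; rfl

lemma mem_interior_absurd {A B : Set (ℝ × ℝ)} (hB : Convex ℝ B)
    (hd : Disjoint (interior A) (interior B)) {p : ℝ × ℝ}
    (hpA : p ∈ interior A) (hpB : p ∈ B) (hBne : (interior B).Nonempty) : False := by
  obtain ⟨w, hw⟩ := hBne
  obtain ⟨r, hr, hball⟩ := Metric.isOpen_iff.mp isOpen_interior p hpA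
  set τ : ℝ := min (1/2) (r / (2 * (‖w - p‖ + 1))) with hτdef
  have hnorm : (0:ℝ) ≤ ‖w - p‖ := norm_nonneg _
  have hτpos : 0 < τ := by
    apply lt_min (by norm_num)
    positivity
  have hτlt : τ < 1 := lt_of_le_of_lt (min_le_left _ _) (by norm_num)
  set z := τ • w + (1 - τ) • p with hzdef
  have hz1 : z ∈ openSegment ℝ w p := ⟨τ, 1 - τ, hτpos, by linarith, by ring, rfl⟩
  have hzB : z ∈ interior B := hB.openSegment_interior_self_subset_interior hw hpB hz1
  have hzA : z ∈ interior A := by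
    apply hball
    have : z - p = τ • (w - p) := by rw [hzdef]; module
    rw [Metric.mem_ball, dist_eq_norm, this, norm_smul, Real.norm_eq_abs, abs_of_pos hτpos]
    have hτle : τ ≤ r / (2 * (‖w - p‖ + 1)) := min_le_right _ _
    have h2 : τ * ‖w - p‖ ≤ r / (2 * (‖w - p‖ + 1)) * ‖w - p‖ := by
      apply mul_le_mul_of_nonneg_right hτle hnorm
    have h3 : r / (2 * (‖w - p‖ + 1)) * ‖w - p‖ < r := by
      rw [div_mul_eq_mul_div, div_lt_iff₀ (by positivity)]
      nlinarith
    linarith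
  exact Set.disjoint_left.mp hd hzA hzB

lemma extract (T X : Triangle) (hdisj : Disjoint (interior X.toSet) (interior T.toSet))
    (htouch : Touches X.toSet T.toSet) :
    ∃ i k : Fin 3,
      (basisOf X.indep) (k+1) ∈ line[ℝ, (basisOf T.indep) (i+1), (basisOf T.indep) (i+2)] ∧
      (basisOf X.indep) (k+2) ∈ line[ℝ, (basisOf T.indep) (i+1), (basisOf T.indep) (i+2)] ∧
      ∀ j : Fin 3, (basisOf T.indep).coord i ((basisOf X.indep) j) ≤ 0 := by
  set bT := basisOf T.indep with hbT
  set bX := basisOf X.indep with hbX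
  have hTset : T.toSet = convexHull ℝ (Set.range ⇑bT) := by rw [hbT]; exact toSet_eq T
  have hXset : X.toSet = convexHull ℝ (Set.range ⇑bX) := by rw [hbX]; exact toSet_eq X
  clear_value bT bX
  clear hbT hbX
  obtain ⟨x, y, hxy, ⟨hxX, hxT⟩, ⟨hyX, hyT⟩⟩ := htouch
  set m : ℝ × ℝ := (1/2 : ℝ) • x + (1/2 : ℝ) • y with hmdef
  have hmX : m ∈ X.toSet :=
    (convex_convexHull ℝ _) hxX hyX (by norm_num) (by norm_num) (by norm_num)
  have hmT : m ∈ T.toSet :=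
    (convex_convexHull ℝ _) hxT hyT (by norm_num) (by norm_num) (by norm_num)
  have hintX : (interior X.toSet).Nonempty := by
    rw [hXset]
    exact ⟨_, bX.centroid_mem_interior_convexHull⟩
  have hintT : (interior T.toSet).Nonempty := by
    rw [hTset]
    exact ⟨_, bT.centroid_mem_interior_convexHull⟩
  have hm_nintT : m ∉ interior T.toSet := fun h =>
    mem_interior_absurd (convex_convexHull ℝ _) hdisj.symm h hmX hintX
  have hm_nintX : m ∉ interior X.toSet := fun h =>
    mem_interior_absurd (convex_convexHull ℝ _) hdisj h hmT hintT
  -- T-coordinates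
  obtain ⟨i, hi0⟩ : ∃ i, bT.coord i m ≤ 0 := by
    rw [hTset, bT.interior_convexHull] at hm_nintT
    simp only [Set.mem_setOf_eq, not_forall, not_lt] at hm_nintT
    exact hm_nintT
  rw [hTset] at hmT hxT hyT
  rw [hXset] at hmX hxX hyX
  have hm0 : bT.coord i m = 0 :=
    le_antisymm hi0 (coord_nonneg_of_mem_hull bT hmT i)
  have hmix : bT.coord i m = (1/2) * bT.coord i x + (1/2) * bT.coord i y :=
    apply_affine_pair _ (by norm_num) x y
  have hx0 : bT.coord i x = 0 := by
    have h1 := coord_nonneg_of_mem_hull bT hxT i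
    have h2 := coord_nonneg_of_mem_hull bT hyT i
    linarith [hmix, hm0]
  have hy0 : bT.coord i y = 0 := by
    have h1 := coord_nonneg_of_mem_hull bT hxT i
    have h2 := coord_nonneg_of_mem_hull bT hyT i
    linarith [hmix, hm0]
  have hxseg : x ∈ segment ℝ (bT (i+1)) (bT (i+2)) := mem_side_of_coord_zero bT hxT i hx0
  have hyseg : y ∈ segment ℝ (bT (i+1)) (bT (i+2)) := mem_side_of_coord_zero bT hyT i hy0
  -- X-coordinates
  obtain ⟨k, hk0⟩ : ∃ k, bX.coord k m ≤ 0 := by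
    rw [hXset, bX.interior_convexHull] at hm_nintX
    simp only [Set.mem_setOf_eq, not_forall, not_lt] at hm_nintX
    exact hm_nintX
  have hkm0 : bX.coord k m = 0 :=
    le_antisymm hk0 (coord_nonneg_of_mem_hull bX hmX k)
  have hmixX : bX.coord k m = (1/2) * bX.coord k x + (1/2) * bX.coord k y :=
    apply_affine_pair _ (by norm_num) x y
  have hkx0 : bX.coord k x = 0 := by
    have h1 := coord_nonneg_of_mem_hull bX hxX k
    have h2 := coord_nonneg_of_mem_hull bX hyX k
    linarith
  have hky0 : bX.coord k y = 0 := by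
    have h1 := coord_nonneg_of_mem_hull bX hxX k
    have h2 := coord_nonneg_of_mem_hull bX hyX k
    linarith
  have hxsegX : x ∈ segment ℝ (bX (k+1)) (bX (k+2)) := mem_side_of_coord_zero bX hxX k hkx0
  have hysegX : y ∈ segment ℝ (bX (k+1)) (bX (k+2)) := mem_side_of_coord_zero bX hyX k hky0
  -- line identification
  have hsub : ∀ a b : ℝ × ℝ, segment ℝ a b ⊆ (line[ℝ, a, b] : Set (ℝ × ℝ)) := by
    intro a b
    rw [← convexHull_pair]
    exact convexHull_subset_affineSpan _
  have hxL : x ∈ line[ℝ, bT (i+1), bT (i+2)] := hsub _ _ hxseg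
  have hyL : y ∈ line[ℝ, bT (i+1), bT (i+2)] := hsub _ _ hyseg
  have hxLX : x ∈ line[ℝ, bX (k+1), bX (k+2)] := hsub _ _ hxsegX
  have hyLX : y ∈ line[ℝ, bX (k+1), bX (k+2)] := hsub _ _ hysegX
  have hlines : line[ℝ, bX (k+1), bX (k+2)] = line[ℝ, bT (i+1), bT (i+2)] := by
    rw [← line_eq hxy hxLX hyLX, ← line_eq hxy hxL hyL]
  refine ⟨i, k, ?_, ?_, ?_⟩
  · rw [← hlines]; exact left_mem_affineSpan_pair _ _ _
  · rw [← hlines]; exact right_mem_affineSpan_pair _ _ _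
  obtain ⟨hne1, hne2, hne3⟩ := fin3_ne i
  obtain ⟨hkne1, hkne2, hkne3⟩ := fin3_ne k
  have hcoordT : ∀ a b : Fin 3, bT.coord a (bT b) = if a = b then 1 else 0 := fun a b =>
    bT.coord_apply a b
  have hcoordX : ∀ a b : Fin 3, bX.coord a (bX b) = if a = b then 1 else 0 := fun a b =>
    bX.coord_apply a b
  have hvan : ∀ z ∈ line[ℝ, bT (i+1), bT (i+2)], bT.coord i z = 0 := by
    intro z hz
    exact vanish (by simp [hcoordT, hne1]) (by simp [hcoordT, hne2]) hz
  have hside1 : bT.coord i (bX (k+1)) = 0 := by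
    apply hvan; rw [← hlines]; exact left_mem_affineSpan_pair _ _ _
  have hside2 : bT.coord i (bX (k+2)) = 0 := by
    apply hvan; rw [← hlines]; exact right_mem_affineSpan_pair _ _ _
  -- third vertex
  have hthird : bT.coord i (bX k) ≤ 0 := by
    by_contra hpos
    push_neg at hpos
    -- midpoint coordinates
    have hsumT := bT.sum_coord_apply_eq_one m
    rw [sum3 (fun j => bT.coord j m) i] at hsumT
    set c1 := bT.coord (i+1) m with hc1
    set c2 := bT.coord (i+2) m with hc2
    have hc1n : 0 ≤ c1 := coord_nonneg_of_mem_hull bT hmT _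
    have hc2n : 0 ≤ c2 := coord_nonneg_of_mem_hull bT hmT _
    have hcsum : c1 + c2 = 1 := by rw [hm0] at hsumT; linarith
    have hxy_ext : ∀ a : Fin 3, (∀ j : Fin 3, bT.coord j x = bT.coord j y) → x = y :=
      fun a h => bT.ext_elem h
    have hc1p : 0 < c1 := by
      rcases lt_or_eq_of_le hc1n with h | h
      · exact h
      exfalso
      have hx1 : bT.coord (i+1) x = 0 := by
        have h1 := coord_nonneg_of_mem_hull bT hxT (i+1)
        have h2 := coord_nonneg_of_mem_hull bT hyT (i+1)
        have := apply_affine_pair (bT.coord (i+1)) (by norm_num : (1:ℝ)/2 + 1/2 = 1) x y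
        rw [hmdef] at hc1
        linarith [hc1.symm.trans this]
      have hy1 : bT.coord (i+1) y = 0 := by
        have h1 := coord_nonneg_of_mem_hull bT hxT (i+1)
        have h2 := coord_nonneg_of_mem_hull bT hyT (i+1)
        have := apply_affine_pair (bT.coord (i+1)) (by norm_num : (1:ℝ)/2 + 1/2 = 1) x y
        rw [hmdef] at hc1
        linarith [hc1.symm.trans this]
      apply hxy
      apply bT.ext_elem
      intro j
      rcases fin3_cases i j with rfl | rfl | rfl
      · rw [hx0, hy0]
      · rw [hx1, hy1]
      · have hsx := bT.sum_coord_apply_eq_one x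
        have hsy := bT.sum_coord_apply_eq_one y
        rw [sum3 (fun j => bT.coord j x) i] at hsx
        rw [sum3 (fun j => bT.coord j y) i] at hsy
        rw [hx0, hx1] at hsx
        rw [hy0, hy1] at hsy
        linarith
    have hc2p : 0 < c2 := by
      rcases lt_or_eq_of_le hc2n with h | h
      · exact h
      exfalso
      have hx1 : bT.coord (i+2) x = 0 := by
        have h1 := coord_nonneg_of_mem_hull bT hxT (i+2)
        have h2 := coord_nonneg_of_mem_hull bT hyT (i+2)
        have := apply_affine_pair (bT.coord (i+2)) (by norm_num : (1:ℝ)/2 + 1/2 = 1) x y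
        rw [hmdef] at hc2
        linarith [hc2.symm.trans this]
      have hy1 : bT.coord (i+2) y = 0 := by
        have h1 := coord_nonneg_of_mem_hull bT hxT (i+2)
        have h2 := coord_nonneg_of_mem_hull bT hyT (i+2)
        have := apply_affine_pair (bT.coord (i+2)) (by norm_num : (1:ℝ)/2 + 1/2 = 1) x y
        rw [hmdef] at hc2
        linarith [hc2.symm.trans this]
      apply hxy
      apply bT.ext_elem
      intro j
      rcases fin3_cases i j with rfl | rfl | rfl
      · rw [hx0, hy0]
      · have hsx := bT.sum_coord_apply_eq_one x
        have hsy := bT.sum_coord_apply_eq_one y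
        rw [sum3 (fun j => bT.coord j x) i] at hsx
        rw [sum3 (fun j => bT.coord j y) i] at hsy
        rw [hx0, hx1] at hsx
        rw [hy0, hy1] at hsy
        linarith
      · rw [hx1, hy1]
    -- X midpoint coordinates
    have hsumX := bX.sum_coord_apply_eq_one m
    rw [sum3 (fun j => bX.coord j m) k] at hsumX
    set d1 := bX.coord (k+1) m with hd1
    set d2 := bX.coord (k+2) m with hd2
    have hd1n : 0 ≤ d1 := coord_nonneg_of_mem_hull bX hmX _
    have hd2n : 0 ≤ d2 := coord_nonneg_of_mem_hull bX hmX _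
    have hdsum : d1 + d2 = 1 := by rw [hkm0] at hsumX; linarith
    have hsxX := bX.sum_coord_apply_eq_one x
    have hsyX := bX.sum_coord_apply_eq_one y
    rw [sum3 (fun j => bX.coord j x) k] at hsxX
    rw [sum3 (fun j => bX.coord j y) k] at hsyX
    have hd1p : 0 < d1 := by
      rcases lt_or_eq_of_le hd1n with h | h
      · exact h
      exfalso
      have h1 := coord_nonneg_of_mem_hull bX hxX (k+1)
      have h2 := coord_nonneg_of_mem_hull bX hyX (k+1)
      have hmm := apply_affine_pair (bX.coord (k+1)) (by norm_num : (1:ℝ)/2 + 1/2 = 1) x y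
      rw [hmdef] at hd1
      have hdd := hd1.symm.trans hmm
      have hax : bX.coord (k+1) x = 0 := by linarith
      have hay : bX.coord (k+1) y = 0 := by linarith
      apply hxy
      apply bX.ext_elem
      intro j'
      obtain hj' | hj' | hj' := fin3_cases k j'
      · rw [hj', hkx0, hky0]
      · rw [hj', hax, hay]
      · rw [hj']
        rw [hkx0, hax] at hsxX
        rw [hky0, hay] at hsyX
        linarith
    have hd2p : 0 < d2 := by
      rcases lt_or_eq_of_le hd2n with h | h
      · exact h
      exfalso
      have h1 := coord_nonneg_of_mem_hull bX hxX (k+2)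
      have h2 := coord_nonneg_of_mem_hull bX hyX (k+2)
      have hmm := apply_affine_pair (bX.coord (k+2)) (by norm_num : (1:ℝ)/2 + 1/2 = 1) x y
      rw [hmdef] at hd2
      have hdd := hd2.symm.trans hmm
      have hax : bX.coord (k+2) x = 0 := by linarith
      have hay : bX.coord (k+2) y = 0 := by linarith
      apply hxy
      apply bX.ext_elem
      intro j'
      obtain hj' | hj' | hj' := fin3_cases k j'
      · rw [hj', hkx0, hky0]
      · rw [hj']
        rw [hkx0, hax] at hsxX
        rw [hky0, hay] at hsyX
        linarith
      · rw [hj', hax, hay]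
    -- the perturbed point
    set u := bX k with hu
    set g1 := bT.coord (i+1) u with hg1
    set g2 := bT.coord (i+2) u with hg2
    set τ : ℝ := min (1/2) (min (c1 / (2 * (1 + |g1|))) (c2 / (2 * (1 + |g2|)))) with hτ
    have hτpos : 0 < τ := by
      apply lt_min (by norm_num)
      apply lt_min <;> positivity
    have hτhalf : τ ≤ 1/2 := min_le_left _ _
    have hτc1 : τ ≤ c1 / (2 * (1 + |g1|)) := le_trans (min_le_right _ _) (min_le_left _ _)
    have hτc2 : τ ≤ c2 / (2 * (1 + |g2|)) := le_trans (min_le_right _ _) (min_le_right _ _)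
    set w : ℝ × ℝ := (1 - τ) • m + τ • u with hw
    have hwcoordT : ∀ a : Fin 3, bT.coord a w = (1 - τ) * bT.coord a m + τ * bT.coord a u :=
      fun a => apply_affine_pair _ (by ring) m u
    have hwcoordX : ∀ a : Fin 3, bX.coord a w = (1 - τ) * bX.coord a m + τ * bX.coord a u :=
      fun a => apply_affine_pair _ (by ring) m u
    have hwX : w ∈ interior X.toSet := by
      rw [hXset, bX.interior_convexHull]
      intro j
      obtain hj | hj | hj := fin3_cases k j
      · rw [hj]
        have e1 : bX.coord k u = 1 := by rw [hu, hcoordX]; simp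
        rw [hwcoordX, hkm0, e1]
        have h3 := hτpos
        linarith only [h3]
      · rw [hj]
        have e1 : bX.coord (k+1) u = 0 := by rw [hu, hcoordX, if_neg hkne1.symm]
        rw [hwcoordX, e1, ← hd1]
        have h3 := mul_pos (by linarith only [hτhalf] : (0:ℝ) < 1 - τ) hd1p
        linarith only [h3]
      · rw [hj]
        have e1 : bX.coord (k+2) u = 0 := by rw [hu, hcoordX, if_neg hkne2.symm]
        rw [hwcoordX, e1, ← hd2]
        have h3 := mul_pos (by linarith only [hτhalf] : (0:ℝ) < 1 - τ) hd2p
        linarith only [h3]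
    have hwT : w ∈ interior T.toSet := by
      rw [hTset, bT.interior_convexHull]
      intro j
      obtain hj | hj | hj := fin3_cases i j
      · rw [hj]
        rw [hwcoordT, hm0]
        have h3 := mul_pos hτpos hpos
        linarith only [h3]
      · rw [hj]
        rw [hwcoordT, ← hg1, ← hc1]
        have hpos2 : (0:ℝ) < 2 * (1 + |g1|) := by positivity
        rw [le_div_iff₀ hpos2] at hτc1
        have h1 : τ * 2 + τ * |g1| * 2 ≤ c1 := by ring_nf at hτc1 ⊢; linarith only [hτc1]
        have h2 : -(τ * |g1|) ≤ τ * g1 := by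
          have h4 := mul_le_mul_of_nonneg_left (neg_abs_le g1) (le_of_lt hτpos)
          rw [mul_neg] at h4
          linarith only [h4]
        have h3 := mul_le_mul_of_nonneg_right
          (by linarith only [hτhalf] : (1/2:ℝ) ≤ 1 - τ) (le_of_lt hc1p)
        linarith only [h1, h2, h3, hτpos]
      · rw [hj]
        rw [hwcoordT, ← hg2, ← hc2]
        have hpos2 : (0:ℝ) < 2 * (1 + |g2|) := by positivity
        rw [le_div_iff₀ hpos2] at hτc2
        have h1 : τ * 2 + τ * |g2| * 2 ≤ c2 := by ring_nf at hτc2 ⊢; linarith only [hτc2]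
        have h2 : -(τ * |g2|) ≤ τ * g2 := by
          have h4 := mul_le_mul_of_nonneg_left (neg_abs_le g2) (le_of_lt hτpos)
          rw [mul_neg] at h4
          linarith only [h4]
        have h3 := mul_le_mul_of_nonneg_right
          (by linarith only [hτhalf] : (1/2:ℝ) ≤ 1 - τ) (le_of_lt hc2p)
        linarith only [h1, h2, h3, hτpos]
    exact Set.disjoint_left.mp hdisj hwX hwT
  intro j
  rcases fin3_cases k j with rfl | rfl | rfl
  · exact hthird
  · rw [hside1]
  · rw [hside2]


lemma fin3_exists_third (a b : Fin 3) : ∃ o : Fin 3, o ≠ a ∧ o ≠ b := by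
  revert a b; decide

lemma fin3_mem_other {a b : Fin 3} (h : a ≠ b) : a = b + 1 ∨ a = b + 2 := by
  revert a b; decide

lemma basisOf_isVertex (T : Triangle) (a : Fin 3) : T.IsVertex ((basisOf T.indep) a) := by
  have h : ⇑(basisOf T.indep) = ![T.a, T.b, T.c] := rfl
  rw [h]
  fin_cases a
  · left; rfl
  · right; left; rfl
  · right; right; rfl

/-- the key geometric fact: two triangles hugging the same pair of noncollinear
sides have overlapping interiors -/
lemma core (b0 b1 : AffineBasis (Fin 3) ℝ (ℝ × ℝ)) (i j : Fin 3) (X Y : Triangle)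
    (hL : (line[ℝ, b0 (i+1), b0 (i+2)] : AffineSubspace ℝ (ℝ × ℝ)) ≠
      line[ℝ, b1 (j+1), b1 (j+2)])
    (hX0 : ∃ k : Fin 3,
      (basisOf X.indep) (k+1) ∈ line[ℝ, b0 (i+1), b0 (i+2)] ∧
      (basisOf X.indep) (k+2) ∈ line[ℝ, b0 (i+1), b0 (i+2)] ∧
      ∀ j' : Fin 3, b0.coord i ((basisOf X.indep) j') ≤ 0)
    (hX1 : ∃ l : Fin 3,
      (basisOf X.indep) (l+1) ∈ line[ℝ, b1 (j+1), b1 (j+2)] ∧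
      (basisOf X.indep) (l+2) ∈ line[ℝ, b1 (j+1), b1 (j+2)] ∧
      ∀ j' : Fin 3, b1.coord j ((basisOf X.indep) j') ≤ 0)
    (hY0 : ∃ k : Fin 3,
      (basisOf Y.indep) (k+1) ∈ line[ℝ, b0 (i+1), b0 (i+2)] ∧
      (basisOf Y.indep) (k+2) ∈ line[ℝ, b0 (i+1), b0 (i+2)] ∧
      ∀ j' : Fin 3, b0.coord i ((basisOf Y.indep) j') ≤ 0)
    (hY1 : ∃ l : Fin 3,
      (basisOf Y.indep) (l+1) ∈ line[ℝ, b1 (j+1), b1 (j+2)] ∧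
      (basisOf Y.indep) (l+2) ∈ line[ℝ, b1 (j+1), b1 (j+2)] ∧
      ∀ j' : Fin 3, b1.coord j ((basisOf Y.indep) j') ≤ 0) :
    ¬ Disjoint (interior X.toSet) (interior Y.toSet) := by
  intro hdisj
  set bX := basisOf X.indep with hbXdef
  set bY := basisOf Y.indep with hbYdef
  have hXset : X.toSet = convexHull ℝ (Set.range ⇑bX) := by rw [hbXdef]; exact toSet_eq X
  have hYset : Y.toSet = convexHull ℝ (Set.range ⇑bY) := by rw [hbYdef]; exact toSet_eq Y
  obtain ⟨kX, hXA1, hXA2, hXf⟩ := hX0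
  obtain ⟨lX, hXB1, hXB2, hXg⟩ := hX1
  obtain ⟨kY, hYA1, hYA2, hYf⟩ := hY0
  obtain ⟨lY, hYB1, hYB2, hYg⟩ := hY1
  clear_value bX bY
  clear hbXdef hbYdef
  obtain ⟨h0ne1, h0ne2, h0ne3⟩ := fin3_ne i
  obtain ⟨h1ne1, h1ne2, h1ne3⟩ := fin3_ne j
  set f := b0.coord i with hf
  set g := b1.coord j with hg
  have hfP : f (b0 (i+1)) = 0 := by rw [hf, b0.coord_apply, if_neg h0ne1]
  have hfQ : f (b0 (i+2)) = 0 := by rw [hf, b0.coord_apply, if_neg h0ne2]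
  have hfR : f (b0 i) ≠ 0 := by rw [hf, b0.coord_apply, if_pos rfl]; norm_num
  have hgP : g (b1 (j+1)) = 0 := by rw [hg, b1.coord_apply, if_neg h1ne1]
  have hgQ : g (b1 (j+2)) = 0 := by rw [hg, b1.coord_apply, if_neg h1ne2]
  have hgR : g (b1 j) ≠ 0 := by rw [hg, b1.coord_apply, if_pos rfl]; norm_num
  have h0PQ : b0 (i+1) ≠ b0 (i+2) := fun h => h0ne3 (b0.ind.injective h)
  have h1PQ : b1 (j+1) ≠ b1 (j+2) := fun h => h1ne3 (b1.ind.injective h)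
  set L : AffineSubspace ℝ (ℝ × ℝ) := line[ℝ, b0 (i+1), b0 (i+2)] with hLdef
  set M : AffineSubspace ℝ (ℝ × ℝ) := line[ℝ, b1 (j+1), b1 (j+2)] with hMdef
  have hfzero : ∀ p : ℝ × ℝ, f p = 0 → p ∈ L :=
    fun p hp => zero_set_subset h0PQ hfP hfQ hfR hp
  have hgzero : ∀ p : ℝ × ℝ, g p = 0 → p ∈ M :=
    fun p hp => zero_set_subset h1PQ hgP hgQ hgR hp
  have hfvan : ∀ p ∈ L, f p = 0 := fun p hp => vanish hfP hfQ hp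
  have hgvan : ∀ p ∈ M, g p = 0 := fun p hp => vanish hgP hgQ hp
  have hLM : ∀ p q : ℝ × ℝ, p ∈ L → p ∈ M → q ∈ L → q ∈ M → p = q := by
    intro p q hpL hpM hqL hqM
    by_contra hne
    exact hL ((line_eq hne hpL hqL).symm.trans (line_eq hne hpM hqM))
  -- structure of a triangle touching both lines
  have hstruct : ∀ (bZ : AffineBasis (Fin 3) ℝ (ℝ × ℝ)) (kZ lZ : Fin 3),
      bZ (kZ+1) ∈ L → bZ (kZ+2) ∈ L → bZ (lZ+1) ∈ M → bZ (lZ+2) ∈ M →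
      (∀ j' : Fin 3, f (bZ j') ≤ 0) → (∀ j' : Fin 3, g (bZ j') ≤ 0) →
      ∃ o : Fin 3, o ≠ kZ ∧ o ≠ lZ ∧ kZ ≠ lZ ∧
        bZ o ∈ L ∧ bZ o ∈ M ∧ bZ lZ ∈ L ∧ bZ kZ ∈ M ∧
        g (bZ lZ) < 0 ∧ f (bZ kZ) < 0 := by
    intro bZ kZ lZ hA1 hA2 hB1 hB2 hfZ hgZ
    have hmemL : ∀ a : Fin 3, a ≠ kZ → bZ a ∈ L := by
      intro a ha
      rcases fin3_mem_other ha with h | h <;> rw [h]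
      exacts [hA1, hA2]
    have hmemM : ∀ a : Fin 3, a ≠ lZ → bZ a ∈ M := by
      intro a ha
      rcases fin3_mem_other ha with h | h <;> rw [h]
      exacts [hB1, hB2]
    have hkl : kZ ≠ lZ := by
      intro h
      have h1 : bZ (kZ+1) = bZ (kZ+2) :=
        hLM _ _ hA1 (by rw [h]; exact hB1) hA2 (by rw [h]; exact hB2)
      exact (fin3_ne kZ).2.2 (bZ.ind.injective h1)
    obtain ⟨o, ho1, ho2⟩ := fin3_exists_third kZ lZ
    have hOL : bZ o ∈ L := hmemL o ho1
    have hOM : bZ o ∈ M := hmemM o ho2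
    have hBL : bZ lZ ∈ L := hmemL lZ (Ne.symm hkl)
    have hDM : bZ kZ ∈ M := hmemM kZ hkl
    have hBneO : bZ lZ ≠ bZ o := fun h => ho2 (bZ.ind.injective h).symm
    have hDneO : bZ kZ ≠ bZ o := fun h => ho1 (bZ.ind.injective h).symm
    have hgB : g (bZ lZ) < 0 := by
      rcases lt_or_eq_of_le (hgZ lZ) with h | h
      · exact h
      exfalso
      exact hBneO (hLM _ _ hBL (hgzero _ h) hOL hOM)
    have hfD : f (bZ kZ) < 0 := by
      rcases lt_or_eq_of_le (hfZ kZ) with h | h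
      · exact h
      exfalso
      exact hDneO (hLM _ _ (hfzero _ h) hDM hOL hOM)
    exact ⟨o, ho1, ho2, hkl, hOL, hOM, hBL, hDM, hgB, hfD⟩
  obtain ⟨o, ho1, ho2, hklX, hOL, hOM, hBL, hDM, hgB, hfD⟩ :=
    hstruct bX kX lX hXA1 hXA2 hXB1 hXB2 hXf hXg
  obtain ⟨o', ho1', ho2', hklY, hOL', hOM', hBL', hDM', hgB', hfD'⟩ :=
    hstruct bY kY lY hYA1 hYA2 hYB1 hYB2 hYf hYg
  set O := bX o with hO
  have hOO' : bY o' = O := hLM _ _ hOL' hOM' hOL hOM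
  have hBneO : bX lX ≠ O := fun h => ho2 (bX.ind.injective h).symm
  have hDneO : bX kX ≠ O := fun h => ho1 (bX.ind.injective h).symm
  -- L = line[O, bX lX], M = line[O, bX kX]
  have hLOB : (line[ℝ, O, bX lX] : AffineSubspace ℝ (ℝ × ℝ)) = L :=
    line_eq (Ne.symm hBneO) hOL hBL
  have hMOD : (line[ℝ, O, bX kX] : AffineSubspace ℝ (ℝ × ℝ)) = M :=
    line_eq (Ne.symm hDneO) hOM hDM
  -- B' and D' as multiples
  have hBmem : (bY lY - O) +ᵥ O ∈ line[ℝ, O, bX lX] := by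
    rw [hLOB]; simpa using hBL'
  obtain ⟨r, hr⟩ := vadd_left_mem_affineSpan_pair.mp hBmem
  have hDmem : (bY kY - O) +ᵥ O ∈ line[ℝ, O, bX kX] := by
    rw [hMOD]; simpa using hDM'
  obtain ⟨t, ht⟩ := vadd_left_mem_affineSpan_pair.mp hDmem
  simp only [vsub_eq_sub] at hr ht
  -- evaluate g on the B relation
  have hgO : g O = 0 := hgvan _ hOM
  have hglin : ∀ x y : ℝ × ℝ, g.linear (x - y) = g x - g y := fun x y => by
    simpa [vsub_eq_sub] using g.linearMap_vsub x y
  have hflin : ∀ x y : ℝ × ℝ, f.linear (x - y) = f x - f y := fun x y => by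
    simpa [vsub_eq_sub] using f.linearMap_vsub x y
  have hgrel : g (bY lY) = r * g (bX lX) := by
    have h1 : g.linear (bY lY - O) = g (bY lY) - g O := hglin _ _
    have h2 : g.linear (bX lX - O) = g (bX lX) - g O := hglin _ _
    rw [← hr, map_smul] at h1
    rw [h2] at h1
    rw [hgO] at h1
    simpa using h1.symm
  have hfrel : f (bY kY) = t * f (bX kX) := by
    have h1 : f.linear (bY kY - O) = f (bY kY) - f O := hflin _ _
    have h2 : f.linear (bX kX - O) = f (bX kX) - f O := hflin _ _
    rw [← ht, map_smul] at h1
    rw [h2] at h1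
    rw [hfvan _ hOL] at h1
    simpa using h1.symm
  have hrpos : 0 < r := by
    by_contra hrneg
    push_neg at hrneg
    nlinarith [hgB', hgrel, mul_nonneg (neg_nonneg.mpr hrneg) (le_of_lt (neg_pos.mpr hgB))]
  have htpos : 0 < t := by
    by_contra htneg
    push_neg at htneg
    nlinarith [hfD', hfrel, mul_nonneg (neg_nonneg.mpr htneg) (le_of_lt (neg_pos.mpr hfD))]
  -- the common interior point
  set ε : ℝ := min (1/4) (min (r/4) (t/4)) with hεdef
  have hεpos : 0 < ε := lt_min (by norm_num) (lt_min (by positivity) (by positivity))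
  have hε1 : ε ≤ 1/4 := min_le_left _ _
  have hε2 : ε ≤ r/4 := le_trans (min_le_right _ _) (min_le_left _ _)
  have hε3 : ε ≤ t/4 := le_trans (min_le_right _ _) (min_le_right _ _)
  set z : ℝ × ℝ := O + ε • (bX lX - O) + ε • (bX kX - O) with hzdef
  have hzX : z ∈ interior X.toSet := by
    rw [hXset]
    exact mem_interior_comb bX ho2 ho1 (Ne.symm hklX) hεpos hεpos (by linarith)
  have hzY : z ∈ interior Y.toSet := by
    rw [hYset]
    have he1 : (ε / r) • (bY lY - bY o') = ε • (bX lX - O) := by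
      rw [hOO', ← hr, smul_smul]
      congr 1
      field_simp
    have he2 : (ε / t) • (bY kY - bY o') = ε • (bX kX - O) := by
      rw [hOO', ← ht, smul_smul]
      congr 1
      field_simp
    have hz' : z = bY o' + (ε / r) • (bY lY - bY o') + (ε / t) • (bY kY - bY o') := by
      rw [he1, he2, hzdef, hOO']
    rw [hz']
    have hdr : ε / r ≤ 1/4 := by
      rw [div_le_iff₀ hrpos]
      linarith
    have hdt : ε / t ≤ 1/4 := by
      rw [div_le_iff₀ htpos]
      linarith
    exact mem_interior_comb bY ho2' ho1' (Ne.symm hklY)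
      (by positivity) (by positivity) (by linarith)
  exact Set.disjoint_left.mp hdisj hzX hzY


end Nine

/-- If no side of T₀ is collinear with a side of T₁, at most nine triangles can
touch both. -/
theorem at_most_nine_common_touching (T₀ T₁ : Triangle)
    (hd : Disjoint (interior T₀.toSet) (interior T₁.toSet))
    (hnc : ∀ x y x' y' : ℝ × ℝ, T₀.IsSide x y → T₁.IsSide x' y' →
      affineSpan ℝ ({x, y} : Set (ℝ × ℝ)) ≠ affineSpan ℝ ({x', y'} : Set (ℝ × ℝ)))
    (S : Set Triangle)
    (hpair : S.Pairwise fun X Y => Disjoint (interior X.toSet) (interior Y.toSet))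
    (hS : ∀ X ∈ S, Disjoint (interior X.toSet) (interior T₀.toSet) ∧
      Disjoint (interior X.toSet) (interior T₁.toSet) ∧
      Touches X.toSet T₀.toSet ∧ Touches X.toSet T₁.toSet) :
    S.Finite ∧ S.ncard ≤ 9 := by
  classical
  have key : ∀ X : Triangle, X ∈ S → ∃ p : Fin 3 × Fin 3,
      (∃ k : Fin 3,
        (Nine.basisOf X.indep) (k+1) ∈
          line[ℝ, (Nine.basisOf T₀.indep) (p.1+1), (Nine.basisOf T₀.indep) (p.1+2)] ∧
        (Nine.basisOf X.indep) (k+2) ∈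
          line[ℝ, (Nine.basisOf T₀.indep) (p.1+1), (Nine.basisOf T₀.indep) (p.1+2)] ∧
        ∀ j' : Fin 3, (Nine.basisOf T₀.indep).coord p.1 ((Nine.basisOf X.indep) j') ≤ 0) ∧
      (∃ l : Fin 3,
        (Nine.basisOf X.indep) (l+1) ∈
          line[ℝ, (Nine.basisOf T₁.indep) (p.2+1), (Nine.basisOf T₁.indep) (p.2+2)] ∧
        (Nine.basisOf X.indep) (l+2) ∈
          line[ℝ, (Nine.basisOf T₁.indep) (p.2+1), (Nine.basisOf T₁.indep) (p.2+2)] ∧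
        ∀ j' : Fin 3, (Nine.basisOf T₁.indep).coord p.2 ((Nine.basisOf X.indep) j') ≤ 0) := by
    intro X hX
    obtain ⟨hd0, hd1, ht0, ht1⟩ := hS X hX
    obtain ⟨i, k, h1, h2, h3⟩ := Nine.extract T₀ X hd0 ht0
    obtain ⟨j, l, h4, h5, h6⟩ := Nine.extract T₁ X hd1 ht1
    exact ⟨(i, j), ⟨k, h1, h2, h3⟩, ⟨l, h4, h5, h6⟩⟩
  have hLM : ∀ i j : Fin 3,
      (line[ℝ, (Nine.basisOf T₀.indep) (i+1), (Nine.basisOf T₀.indep) (i+2)] :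
        AffineSubspace ℝ (ℝ × ℝ)) ≠
      line[ℝ, (Nine.basisOf T₁.indep) (j+1), (Nine.basisOf T₁.indep) (j+2)] := by
    intro i j
    apply hnc
    · exact ⟨fun h => (Nine.fin3_ne i).2.2 ((Nine.basisOf T₀.indep).ind.injective h),
        Nine.basisOf_isVertex T₀ _, Nine.basisOf_isVertex T₀ _⟩
    · exact ⟨fun h => (Nine.fin3_ne j).2.2 ((Nine.basisOf T₁.indep).ind.injective h),
        Nine.basisOf_isVertex T₁ _, Nine.basisOf_isVertex T₁ _⟩
  have hchoice := fun X : ↥S => key X.1 X.2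
  choose φ hφ using hchoice
  have hinj : Function.Injective φ := by
    intro X Y hXY
    by_contra hne
    have hne' : (X : Triangle) ≠ (Y : Triangle) := fun h => hne (Subtype.ext h)
    obtain ⟨hA, hB⟩ := hφ X
    obtain ⟨hC, hD⟩ := hφ Y
    rw [hXY] at hA hB
    exact Nine.core _ _ (φ Y).1 (φ Y).2 X Y (hLM _ _) hA hB hC hD
      (hpair X.2 Y.2 hne')
  have hfin : Finite ↥S := Finite.of_injective φ hinj
  have hfin' : S.Finite := Set.finite_coe_iff.mp hfin
  refine ⟨hfin', ?_⟩
  have h9 : Nat.card ↥S ≤ Nat.card (Fin 3 × Fin 3) := Nat.card_le_card_of_injective φ hinj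
  rw [Nat.card_coe_set_eq] at h9
  simpa using h9
end
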